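/- arXiv:0909.1156 — 6 statements merged into one kernel-verified Lean document; each statement's English description precedes it below -/
import Mathlib

section
/- Let ψ be a nontrivial additive character of F_q and let n be a positive integer. Let Ω_n be the set of all n×n nonsingular symmetric matrices over F_q. Then ∑_{B∈Ω_n} ∑_{h∈F_q^n} ψ(hᵀBh) = q^{n(n+2)/4}·∏_{j=1}^{n/2}(q^{2j-1}-1) if n is even, and ∑_{B∈Ω_n} ∑_{h∈F_q^n} ψ(hᵀBh) = 0 if n is odd. -/
/-!
Let `q = |F|` and let `S_κ` (`symGaussSumOn`) be the sum of `ψ(hᵀBh)` over nonsingular symmetric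
`B` indexed by `κ` and all `h`. Write a symmetric matrix on `Unit ⊕ κ` as `[[a, bᵀ], [b, C]]` and
a vector as `(x, y)`, so that `hᵀBh = a x² + 2x (b ⬝ y) + yᵀCy`. For `a ≠ 0`, completing the
square and passing to the Schur complement `C - a⁻¹ b bᵀ` turns the contribution of `a` into
`G(a) · S_κ` with `G(a) = ∑ₓ ψ(a x²)`, and these cancel because `∑_{a ≠ 0} G(a) = 0`. For
`a = 0`, since `2 ≠ 0` (the characteristic is 3) the sum over `x` restricts `y` to `b⊥`. The
resulting bordered sum vanishes at `b = 0`, is constant on `b ≠ 0` by the transitive action of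
`GL_κ`, and at `b = e₁` peels off one more coordinate. Hence `S_{n+2} = q^{n+2} (q^{n+1} - 1) S_n`
with `S_0 = 1` and `S_1 = 0`.
-/

open Finset Matrix

/-- Sum of `ψ(hᵀBh)` over all nonsingular symmetric n×n matrices B and all
column vectors h over F. -/
noncomputable def symGaussSum (F : Type) [Field F] [Fintype F] [DecidableEq F]
    (ψ : AddChar F ℂ) (n : ℕ) : ℂ :=
  ∑ B ∈ Finset.univ.filter
      (fun B : Matrix (Fin n) (Fin n) F => B.det ≠ 0 ∧ Bᵀ = B),
    ∑ h : Fin n → F, ψ (h ⬝ᵥ B.mulVec h)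

variable {F : Type*}

section CharacterSums
variable [Field F] [Fintype F] [DecidableEq F] {ψ : AddChar F ℂ}

theorem sum_addChar_mul_eq_ite (hψ : ψ ≠ 1) (t : F) :
    ∑ x, ψ (x * t) = if t = 0 then (Fintype.card F : ℂ) else 0 := by
  rw [AddChar.sum_mulShift t (AddChar.IsPrimitive.of_ne_one hψ), Nat.cast_ite, Nat.cast_zero]

theorem sum_sum_addChar_mul_sq_eq_zero (hψ : ψ ≠ 1) :
    ∑ a ∈ univ.filter (· ≠ 0), ∑ x, ψ (a * x ^ 2) = 0 := by
  have inner (x : F) : ∑ a ∈ univ.filter (· ≠ 0), ψ (a * x ^ 2) =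
      (if x = 0 then (Fintype.card F : ℂ) else 0) - 1 := by
    rw [filter_ne' univ 0, sum_erase_eq_sub (mem_univ 0), sum_addChar_mul_eq_ite hψ]
    simp
  rw [sum_comm, sum_congr rfl fun x _ => inner x, sum_sub_distrib]
  simp

end CharacterSums

section SymBlock
variable {κ : Type*}

def symBlock (a : F) (b : κ → F) (C : Matrix κ κ F) : Matrix (Unit ⊕ κ) (Unit ⊕ κ) F :=
  fromBlocks (of fun _ _ => a) (replicateRow Unit b) (replicateCol Unit b) C

theorem symBlock_transpose (a : F) (b : κ → F) (C : Matrix κ κ F) :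
    (symBlock a b C)ᵀ = symBlock a b Cᵀ := by
  rw [symBlock, fromBlocks_transpose]; rfl

theorem sum_transpose_eq_self_eq_sum_symBlock [Fintype F] [DecidableEq F] [Fintype κ]
    [DecidableEq κ] {M : Type*} [AddCommMonoid M] (f : Matrix (Unit ⊕ κ) (Unit ⊕ κ) F → M) :
    ∑ B ∈ univ.filter (fun B => Bᵀ = B), f B =
      ∑ a, ∑ b, ∑ C ∈ univ.filter (fun C : Matrix κ κ F => Cᵀ = C), f (symBlock a b C) := by
  simp_rw [← sum_product']
  symm
  refine sum_nbij' (fun p => symBlock p.1 p.2.1 p.2.2)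
    (fun B => (B (.inl ()) (.inl ()), fun k => B (.inl ()) (.inr k), toBlocks₂₂ B))
    ?_ ?_ ?_ ?_ fun _ _ => rfl
  · simp +contextual [symBlock_transpose]
  · simp only [mem_filter, mem_univ, true_and, mem_product]
    exact fun B hB => congrArg toBlocks₂₂ hB
  · intro p _; rfl
  · simp only [mem_filter, mem_univ, true_and]
    intro B hB
    ext (⟨⟩ | i) (⟨⟩ | j)
    exacts [rfl, rfl, congrFun (congrFun hB _) _, rfl]

theorem sum_fun_unit_sum [Fintype F] [Fintype κ] [DecidableEq κ] {M : Type*} [AddCommMonoid M]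
    (f : (Unit ⊕ κ → F) → M) :
    ∑ h, f h = ∑ x, ∑ y, f (Sum.elim (fun _ => x) y) := by
  rw [← (Equiv.sumArrowEquivProdArrow Unit κ F).symm.sum_comp, Fintype.sum_prod_type,
    ← (Equiv.funUnique Unit F).symm.sum_comp]
  rfl

section CommRing
variable [CommRing F] [Fintype κ]

theorem sumElim_dotProduct_symBlock_mulVec (a : F) (b : κ → F) (C : Matrix κ κ F) (x : F)
    (y : κ → F) :
    Sum.elim (fun _ => x) y ⬝ᵥ symBlock a b C *ᵥ Sum.elim (fun _ => x) y =
      a * x ^ 2 + 2 * x * (b ⬝ᵥ y) + y ⬝ᵥ C *ᵥ y := by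
  rw [symBlock, fromBlocks_mulVec, sumElim_dotProduct_sumElim]
  have hcol : replicateCol Unit b *ᵥ (fun _ => x) = x • b := by
    ext; simp [mulVec, dotProduct, mul_comm]
  rw [Sum.elim_comp_inl, Sum.elim_comp_inr, replicateRow_mulVec_eq_const, hcol, dotProduct_add,
    dotProduct_add, dotProduct_smul, dotProduct_comm y b]
  simp [dotProduct, mulVec]
  ring

theorem fromBlocks_mul_symBlock_mul_transpose (g : Matrix κ κ F) (a : F) (b : κ → F)
    (C : Matrix κ κ F) :
    fromBlocks 1 0 0 g * symBlock a b C * (fromBlocks 1 0 0 g)ᵀ =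
      symBlock a (g *ᵥ b) (g * C * gᵀ) := by
  rw [fromBlocks_transpose, symBlock, fromBlocks_multiply, fromBlocks_multiply, symBlock]
  simp only [transpose_one, transpose_zero, Matrix.one_mul, Matrix.zero_mul, Matrix.mul_zero,
    add_zero, zero_add, Matrix.mul_one]
  congr 1
  rw [← replicateRow_vecMul, vecMul_transpose]

theorem det_symBlock_zero_zero [DecidableEq κ] (C : Matrix κ κ F) : (symBlock 0 0 C).det = 0 :=
  det_eq_zero_of_row_eq_zero (.inl ()) fun j => by cases j <;> rfl

end CommRing

section Field
variable [Field F] [Fintype κ] [DecidableEq κ]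

theorem det_symBlock_of_ne_zero {a : F} (ha : a ≠ 0) (b : κ → F) (C : Matrix κ κ F) :
    (symBlock a b C).det = a * (C - a⁻¹ • vecMulVec b b).det := by
  let _ : Invertible (of fun _ _ => a : Matrix Unit Unit F) :=
    ⟨of fun _ _ => a⁻¹, by ext; simp [mul_apply, ha], by ext; simp [mul_apply, ha]⟩
  rw [symBlock, det_fromBlocks₁₁, det_unique]
  congr 2
  ext i j
  simp [vecMulVec, mul_apply, replicateCol, replicateRow]
  ring

theorem det_symBlock_zero_single_symBlock_ne_zero_iff (c : F) (u : κ → F) (C : Matrix κ κ F) :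
    (symBlock 0 (Pi.single (.inl ()) 1) (symBlock c u C)).det ≠ 0 ↔ C.det ≠ 0 := by
  let A : Matrix (Unit ⊕ Unit) (Unit ⊕ Unit) F := symBlock 0 1 (of fun _ _ => c)
  let _ : Invertible A := ⟨symBlock (-c) 1 0,
    by ext (⟨⟩ | ⟨⟩) (⟨⟩ | ⟨⟩) <;> simp [A, symBlock, mul_apply],
    by ext (⟨⟩ | ⟨⟩) (⟨⟩ | ⟨⟩) <;> simp [A, symBlock, mul_apply]⟩
  have hblocks : (symBlock 0 (Pi.single (.inl ()) 1) (symBlock c u C)).submatrix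
      (Equiv.sumAssoc Unit Unit κ) (Equiv.sumAssoc Unit Unit κ) =
      fromBlocks A (fromRows 0 (replicateRow Unit u)) (fromCols 0 (replicateCol Unit u)) C := by
    ext ((⟨⟩ | ⟨⟩) | i) ((⟨⟩ | ⟨⟩) | j) <;> simp [A, symBlock]
  have hschur : fromCols (0 : Matrix κ Unit F) (replicateCol Unit u) * ⅟A *
      fromRows (0 : Matrix Unit κ F) (replicateRow Unit u) = 0 := by
    rw [show ⅟A = symBlock (-c) 1 0 from rfl]
    ext; simp [symBlock, mul_apply]
  rw [← det_submatrix_equiv_self (Equiv.sumAssoc Unit Unit κ), hblocks, det_fromBlocks₁₁, hschur,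
    sub_zero, mul_ne_zero_iff, and_iff_right (isUnit_det_of_invertible A).ne_zero]

end Field

end SymBlock

theorem exists_isUnit_mulVec_eq {κ : Type*} [Field F] [Fintype κ] [DecidableEq κ] {v w : κ → F}
    (hv : v ≠ 0) (hw : w ≠ 0) : ∃ g : Matrix κ κ F, IsUnit g ∧ g *ᵥ v = w := by
  obtain ⟨e, he⟩ := Submodule.exists_linearEquiv_restrict_eq
    ((LinearEquiv.toSpanNonzeroSingleton F _ v hv).symm.trans
      (LinearEquiv.toSpanNonzeroSingleton F _ w hw))
  refine ⟨LinearMap.toMatrix' e, ?_, ?_⟩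
  · rw [isUnit_iff_isUnit_det, LinearMap.det_toMatrix']
    exact LinearEquiv.isUnit_det' e
  · have hv1 : (LinearEquiv.toSpanNonzeroSingleton F _ v hv).symm
        ⟨v, Submodule.mem_span_singleton_self v⟩ = 1 := LinearEquiv.coord_self F _ v hv
    rw [LinearMap.toMatrix'_mulVec]
    simpa [hv1] using (he ⟨v, Submodule.mem_span_singleton_self v⟩).symm

section GaussSums
variable [Field F] [Fintype F] (ψ : AddChar F ℂ)
variable {ι κ : Type*} [Fintype ι] [DecidableEq ι] [Fintype κ] [DecidableEq κ]

noncomputable def quadCharSum (B : Matrix κ κ F) : ℂ :=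
  ∑ h, ψ (h ⬝ᵥ B *ᵥ h)

theorem quadCharSum_symBlock (a : F) (b : κ → F) (C : Matrix κ κ F) :
    quadCharSum ψ (symBlock a b C) =
      ∑ x, ∑ y, ψ (a * x ^ 2 + 2 * x * (b ⬝ᵥ y) + y ⬝ᵥ C *ᵥ y) := by
  simp_rw [quadCharSum, sum_fun_unit_sum, sumElim_dotProduct_symBlock_mulVec]

/-- Completing the square in the first coordinate. -/
theorem quadCharSum_symBlock_add_vecMulVec {a : F} (ha : a ≠ 0) (b : κ → F) (D : Matrix κ κ F) :
    quadCharSum ψ (symBlock a b (D + a⁻¹ • vecMulVec b b)) =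
      (∑ x, ψ (a * x ^ 2)) * quadCharSum ψ D := by
  rw [quadCharSum_symBlock, sum_comm, quadCharSum, mul_sum]
  refine sum_congr rfl fun y _ => ?_
  have hsq (x : F) : a * x ^ 2 + 2 * x * (b ⬝ᵥ y) + y ⬝ᵥ (D + a⁻¹ • vecMulVec b b) *ᵥ y =
      a * (x + a⁻¹ * (b ⬝ᵥ y)) ^ 2 + y ⬝ᵥ D *ᵥ y := by
    rw [add_mulVec, smul_mulVec, vecMulVec_mulVec, dotProduct_add, dotProduct_smul,
      dotProduct_smul, dotProduct_comm y b]
    simp only [MulOpposite.smul_eq_mul_unop, MulOpposite.unop_op, smul_eq_mul]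
    field_simp
    ring
  calc ∑ x, ψ (a * x ^ 2 + 2 * x * (b ⬝ᵥ y) + y ⬝ᵥ (D + a⁻¹ • vecMulVec b b) *ᵥ y)
      = ∑ x, ψ (a * (x + a⁻¹ * (b ⬝ᵥ y)) ^ 2 + y ⬝ᵥ D *ᵥ y) := by simp_rw [hsq]
    _ = ∑ x, ψ (a * x ^ 2 + y ⬝ᵥ D *ᵥ y) :=
      Fintype.sum_equiv (Equiv.addRight _) _ _ fun _ => rfl
    _ = (∑ x, ψ (a * x ^ 2)) * ψ (y ⬝ᵥ D *ᵥ y) := by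
      simp_rw [AddChar.map_add_eq_mul, sum_mul]

variable [DecidableEq F]

variable (κ) in
noncomputable def symGaussSumOn : ℂ :=
  ∑ B ∈ univ.filter (fun B : Matrix κ κ F => B.det ≠ 0 ∧ Bᵀ = B), quadCharSum ψ B

theorem symGaussSumOn_eq_sum_ite :
    symGaussSumOn ψ κ = ∑ B ∈ univ.filter (fun B : Matrix κ κ F => Bᵀ = B),
      if B.det ≠ 0 then quadCharSum ψ B else 0 := by
  rw [← sum_filter, filter_filter, symGaussSumOn]
  simp_rw [and_comm]

theorem symGaussSumOn_congr (e : ι ≃ κ) : symGaussSumOn ψ ι = symGaussSumOn ψ κ := by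
  refine sum_bijective (reindex e e) (reindex e e).bijective ?_ fun B _ => ?_
  · simp only [mem_filter, mem_univ, true_and, det_reindex_self, transpose_reindex,
      (reindex e e).injective.eq_iff, implies_true]
  · refine Fintype.sum_equiv (e.arrowCongr (Equiv.refl F)) _ _ fun h => ?_
    change _ = ψ ((h ∘ e.symm) ⬝ᵥ reindex e e B *ᵥ (h ∘ e.symm))
    rw [reindex_apply, submatrix_mulVec_equiv, comp_equiv_symm_dotProduct]
    simp [Function.comp_def]

theorem symGaussSumOn_of_isEmpty [IsEmpty κ] : symGaussSumOn ψ κ = 1 := by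
  rw [symGaussSumOn, filter_true_of_mem fun B _ => ⟨by simp, Subsingleton.elim _ _⟩]
  simp [quadCharSum, Fintype.card_eq_one_iff.2 ⟨(0 : Matrix κ κ F), fun B => Subsingleton.elim B 0⟩]

theorem quadCharSum_symBlock_zero (hψ : ψ ≠ 1) (h2 : (2 : F) ≠ 0) (b : κ → F)
    (C : Matrix κ κ F) :
    quadCharSum ψ (symBlock 0 b C) =
      Fintype.card F * ∑ y ∈ univ.filter (fun y => b ⬝ᵥ y = 0), ψ (y ⬝ᵥ C *ᵥ y) := by
  rw [quadCharSum_symBlock, sum_comm, sum_filter, mul_sum]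
  refine sum_congr rfl fun y _ => ?_
  have hlin (x : F) : 2 * x * (b ⬝ᵥ y) = x * (2 * (b ⬝ᵥ y)) := by ring
  simp_rw [zero_mul, zero_add, AddChar.map_add_eq_mul, ← sum_mul, hlin, sum_addChar_mul_eq_ite hψ,
    mul_eq_zero, h2, false_or]
  split_ifs <;> simp

theorem sum_symBlock_of_ne_zero {a : F} (ha : a ≠ 0) (b : κ → F) :
    ∑ C ∈ univ.filter (fun C : Matrix κ κ F => Cᵀ = C),
      (if (symBlock a b C).det ≠ 0 then quadCharSum ψ (symBlock a b C) else 0) =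
      (∑ x, ψ (a * x ^ 2)) * symGaussSumOn ψ κ := by
  rw [symGaussSumOn_eq_sum_ite, mul_sum]
  symm
  refine sum_nbij' (· + a⁻¹ • vecMulVec b b) (· - a⁻¹ • vecMulVec b b) ?_ ?_ (by simp) (by simp) ?_
  · simp [transpose_add]
  · simp [transpose_sub]
  · intro D _
    rw [quadCharSum_symBlock_add_vecMulVec ψ ha, det_symBlock_of_ne_zero ha, add_sub_cancel_right,
      mul_ite, mul_zero]
    simp [ha]

variable (κ) in
noncomputable def borderedGaussSum (v : κ → F) : ℂ :=
  ∑ C ∈ univ.filter (fun C : Matrix κ κ F => Cᵀ = C),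
    if (symBlock 0 v C).det ≠ 0 then
      ∑ y ∈ univ.filter (fun y => v ⬝ᵥ y = 0), ψ (y ⬝ᵥ C *ᵥ y)
    else 0

theorem symGaussSumOn_unit_sum (hψ : ψ ≠ 1) (h2 : (2 : F) ≠ 0) :
    symGaussSumOn ψ (Unit ⊕ κ) = Fintype.card F * ∑ v, borderedGaussSum ψ κ v := by
  have hunits : ∑ a ∈ univ.filter (· ≠ 0), ∑ b : κ → F, ∑ C ∈ univ.filter (fun C => Cᵀ = C),
      (if (symBlock a b C).det ≠ 0 then quadCharSum ψ (symBlock a b C) else 0) = 0 := by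
    rw [sum_comm]
    refine sum_eq_zero fun b _ => ?_
    rw [sum_congr rfl fun a ha => sum_symBlock_of_ne_zero ψ (mem_filter.1 ha).2 b, ← sum_mul,
      sum_sum_addChar_mul_sq_eq_zero hψ, zero_mul]
  rw [symGaussSumOn_eq_sum_ite, sum_transpose_eq_self_eq_sum_symBlock,
    ← add_sum_erase _ _ (mem_univ 0), ← filter_ne', hunits, add_zero, mul_sum]
  refine sum_congr rfl fun v _ => ?_
  rw [borderedGaussSum, mul_sum]
  refine sum_congr rfl fun C _ => ?_
  rw [quadCharSum_symBlock_zero ψ hψ h2, mul_ite, mul_zero]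

theorem borderedGaussSum_zero : borderedGaussSum ψ κ 0 = 0 :=
  sum_eq_zero fun C _ => if_neg (not_not.2 (det_symBlock_zero_zero C))

theorem borderedGaussSum_mulVec {g : Matrix κ κ F} (hg : IsUnit g) (v : κ → F) :
    borderedGaussSum ψ κ (g *ᵥ v) = borderedGaussSum ψ κ v := by
  have hgT : IsUnit gᵀ := (isUnit_transpose g).2 hg
  have hconj : Function.Injective fun C : Matrix κ κ F => g * C * gᵀ :=
    fun C C' h => hg.mul_left_cancel (hgT.mul_right_cancel h)
  have hdet (C : Matrix κ κ F) :
      (symBlock 0 (g *ᵥ v) (g * C * gᵀ)).det = g.det * (symBlock 0 v C).det * g.det := by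
    rw [← fromBlocks_mul_symBlock_mul_transpose, det_mul, det_mul, det_transpose,
      det_fromBlocks_zero₂₁, det_one, one_mul]
  have hsum (C : Matrix κ κ F) :
      ∑ y ∈ univ.filter (fun y => g *ᵥ v ⬝ᵥ y = 0), ψ (y ⬝ᵥ (g * C * gᵀ) *ᵥ y) =
        ∑ y ∈ univ.filter (fun y => v ⬝ᵥ y = 0), ψ (y ⬝ᵥ C *ᵥ y) := by
    refine sum_bijective (gᵀ *ᵥ ·) ⟨mulVec_injective_iff_isUnit.2 hgT,
      mulVec_surjective_iff_isUnit.2 hgT⟩ ?_ ?_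
    · simp [dotProduct_mulVec, vecMul_transpose]
    · intro y _
      rw [← mulVec_mulVec, ← mulVec_mulVec, dotProduct_mulVec, ← mulVec_transpose]
  refine (sum_bijective _ hconj.bijective_of_finite ?_ ?_).symm
  · intro C
    simp only [mem_filter, mem_univ, true_and, transpose_mul, transpose_transpose,
      ← Matrix.mul_assoc]
    exact hconj.eq_iff.symm
  · intro C _
    simp [hdet, hsum, ((isUnit_iff_isUnit_det g).1 hg).ne_zero]

theorem sum_borderedGaussSum {w : κ → F} (hw : w ≠ 0) :
    ∑ v, borderedGaussSum ψ κ v =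
      (Fintype.card F ^ Fintype.card κ - 1) * borderedGaussSum ψ κ w := by
  have hconst (v) (hv : v ∈ univ.erase 0) : borderedGaussSum ψ κ v = borderedGaussSum ψ κ w := by
    obtain ⟨g, hg, rfl⟩ := exists_isUnit_mulVec_eq hw (ne_of_mem_erase hv)
    exact borderedGaussSum_mulVec ψ hg w
  rw [← add_sum_erase _ _ (mem_univ 0), borderedGaussSum_zero, zero_add, sum_congr rfl hconst,
    sum_const, card_erase_of_mem (mem_univ _), card_univ, Fintype.card_fun, nsmul_eq_mul,
    Nat.cast_sub (Nat.one_le_pow _ _ Fintype.card_pos)]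
  push_cast
  rfl

theorem sum_single_dotProduct_eq_zero_symBlock (c : F) (u : κ → F) (C : Matrix κ κ F) :
    ∑ y ∈ univ.filter (fun y => Pi.single (.inl ()) 1 ⬝ᵥ y = 0), ψ (y ⬝ᵥ symBlock c u C *ᵥ y) =
      quadCharSum ψ C := by
  rw [sum_filter, sum_fun_unit_sum, sum_comm]
  simp [single_dotProduct, sumElim_dotProduct_symBlock_mulVec, quadCharSum]

theorem borderedGaussSum_single :
    borderedGaussSum ψ (Unit ⊕ κ) (Pi.single (.inl ()) 1) =
      Fintype.card F ^ (Fintype.card κ + 1) * symGaussSumOn ψ κ := by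
  rw [borderedGaussSum, sum_transpose_eq_self_eq_sum_symBlock]
  simp_rw [det_symBlock_zero_single_symBlock_ne_zero_iff, sum_single_dotProduct_eq_zero_symBlock,
    ← symGaussSumOn_eq_sum_ite]
  simp [sum_const, card_univ, pow_succ]
  ring

theorem symGaussSumOn_unit_sum_unit_sum (hψ : ψ ≠ 1) (h2 : (2 : F) ≠ 0) :
    symGaussSumOn ψ (Unit ⊕ Unit ⊕ κ) = Fintype.card F ^ (Fintype.card κ + 2) *
      (Fintype.card F ^ (Fintype.card κ + 1) - 1) * symGaussSumOn ψ κ := by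
  rw [symGaussSumOn_unit_sum ψ hψ h2, sum_borderedGaussSum ψ (Pi.single_ne_zero_iff.2 one_ne_zero),
    borderedGaussSum_single, Fintype.card_sum, Fintype.card_unit]
  ring

theorem symGaussSumOn_unit (hψ : ψ ≠ 1) (h2 : (2 : F) ≠ 0) : symGaussSumOn ψ Unit = 0 := by
  rw [← symGaussSumOn_congr ψ (Equiv.sumEmpty Unit Empty), symGaussSumOn_unit_sum ψ hψ h2,
    Fintype.sum_unique, Subsingleton.elim default 0, borderedGaussSum_zero, mul_zero]

end GaussSums

section ClosedForm
variable [Field F] [Fintype F] [DecidableEq F] {ψ : AddChar F ℂ}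

theorem symGaussSumOn_fin_add_two (hψ : ψ ≠ 1) (h2 : (2 : F) ≠ 0) (n : ℕ) :
    symGaussSumOn ψ (Fin (n + 2)) =
      Fintype.card F ^ (n + 2) * (Fintype.card F ^ (n + 1) - 1) * symGaussSumOn ψ (Fin n) := by
  rw [← symGaussSumOn_congr ψ (Fintype.equivOfCardEq (by simp; omega) :
      Unit ⊕ Unit ⊕ Fin n ≃ Fin (n + 2)),
    symGaussSumOn_unit_sum_unit_sum ψ hψ h2, Fintype.card_fin]

theorem symGaussSumOn_fin_two_mul (hψ : ψ ≠ 1) (h2 : (2 : F) ≠ 0) (k : ℕ) :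
    symGaussSumOn ψ (Fin (2 * k)) = (Fintype.card F : ℂ) ^ (k * (k + 1)) *
      ∏ j ∈ Icc 1 k, ((Fintype.card F : ℂ) ^ (2 * j - 1) - 1) := by
  induction k with
  | zero => simp [symGaussSumOn_of_isEmpty]
  | succ k ih =>
    rw [mul_add_one, symGaussSumOn_fin_add_two hψ h2, ih, prod_Icc_succ_top (by omega),
      show 2 * (k + 1) - 1 = 2 * k + 1 by omega]
    ring

theorem symGaussSumOn_fin_two_mul_add_one (hψ : ψ ≠ 1) (h2 : (2 : F) ≠ 0) (k : ℕ) :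
    symGaussSumOn ψ (Fin (2 * k + 1)) = 0 := by
  induction k with
  | zero => rw [← symGaussSumOn_congr ψ finOneEquiv.symm, symGaussSumOn_unit ψ hψ h2]
  | succ k ih => rw [show 2 * (k + 1) + 1 = 2 * k + 1 + 2 by ring,
      symGaussSumOn_fin_add_two hψ h2, ih, mul_zero]

end ClosedForm

theorem symGaussSum_eq_symGaussSumOn (F : Type) [Field F] [Fintype F] [DecidableEq F]
    (ψ : AddChar F ℂ) (n : ℕ) : symGaussSum F ψ n = symGaussSumOn ψ (Fin n) :=
  rfl

theorem two_ne_zero_of_card_eq_three_pow [Field F] [Fintype F] {r : ℕ}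
    (hF : Fintype.card F = 3 ^ r) : (2 : F) ≠ 0 := by
  have h3 : (3 : F) = 0 := by
    have hcard : ((3 ^ r : ℕ) : F) = 0 := hF ▸ FiniteField.cast_card_eq_zero F
    exact (pow_eq_zero_iff'.1 (by exact_mod_cast hcard)).1
  intro h2
  exact one_ne_zero (by linear_combination h3 - h2 : (1 : F) = 0)

theorem sym_gauss_sum_eval_general (r : ℕ) (F : Type) [Field F] [Fintype F]
    [DecidableEq F] (hF : Fintype.card F = 3 ^ r)
    (ψ : AddChar F ℂ) (hψ : ψ ≠ 1) (n : ℕ) :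
    (Even n →
      symGaussSum F ψ n =
        (3 ^ r : ℂ) ^ (n * (n + 2) / 4) *
          ∏ j ∈ Finset.Icc 1 (n / 2), ((3 ^ r : ℂ) ^ (2 * j - 1) - 1)) ∧
    (Odd n → symGaussSum F ψ n = 0) := by
  have h2 : (2 : F) ≠ 0 := two_ne_zero_of_card_eq_three_pow hF
  have hq : (3 ^ r : ℂ) = Fintype.card F := by rw [hF, Nat.cast_pow, Nat.cast_ofNat]
  simp only [symGaussSum_eq_symGaussSumOn, hq]
  refine ⟨fun ⟨k, hk⟩ => ?_, fun ⟨k, hk⟩ => ?_⟩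
  · have hexp : 2 * k * (2 * k + 2) / 4 = k * (k + 1) := by
      rw [show 2 * k * (2 * k + 2) = 4 * (k * (k + 1)) by ring, Nat.mul_div_cancel_left _ four_pos]
    rw [hk, ← two_mul, symGaussSumOn_fin_two_mul hψ h2, hexp, Nat.mul_div_cancel_left k two_pos]
  · rw [hk, symGaussSumOn_fin_two_mul_add_one hψ h2]

/-- `∑_{B ∈ Ω_n} ∑_{h ∈ F_q^n} ψ(hᵀBh)` equals `q^{n(n+2)/4}·∏_{j=1}^{n/2}(q^{2j-1}-1)`
for n even, and 0 for n odd, where q = 3^r. -/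
theorem sym_gauss_sum_eval (r : ℕ) (hr : 0 < r) (F : Type) [Field F] [Fintype F]
    [DecidableEq F] (hF : Fintype.card F = 3 ^ r)
    (ψ : AddChar F ℂ) (hψ : ψ ≠ 1) (n : ℕ) (hn : 0 < n) :
    (Even n →
      symGaussSum F ψ n =
        (3 ^ r : ℂ) ^ (n * (n + 2) / 4) *
          ∏ j ∈ Finset.Icc 1 (n / 2), ((3 ^ r : ℂ) ^ (2 * j - 1) - 1)) ∧
    (Odd n → symGaussSum F ψ n = 0) :=
  sym_gauss_sum_eval_general r F hF ψ hψ n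
end

section
/- Let ψ be any nontrivial additive character of F_q. Then ∑_{w∈O(3,q)} ψ(Tr w) = (ψ(1)+ψ(-1))·q·K(ψ;1), where Tr denotes the matrix trace. -/
/-!
In characteristic 3 the group `O(3,q)` has a Bruhat decomposition `B ⊔ U J B`. The Borel subgroup
`B`, the stabiliser of the isotropic line `F e₀`, consists of the matrices `borelMat a t e` with
`a ≠ 0`, `t` arbitrary and `e = ±1`, whose trace is `a + a⁻¹ + e`; summing `ψ` of it over `t`,
`e` and `a` gives `q (ψ(1) + ψ(-1)) K(ψ;1)`. On the big cell `borelMat 1 s 1 * J * borelMat a t e`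
the trace is `a (s + e t)² + e`, and for fixed `t, e` the sum of `ψ (a x²)` over `a ≠ 0` and all
`x` vanishes, since the inner sum over `a` is `q - 1` at `x = 0` and `-1` elsewhere.
-/

open Finset Matrix

/-- The matrix J defining the orthogonal group O(3,q). -/
def matJ (F : Type) [Field F] : Matrix (Fin 3) (Fin 3) F := !![0,1,0; 1,0,0; 0,0,1]

/-- The Kloosterman sum `K(ψ;a) = ∑_{α ∈ F^*} ψ(α + a·α⁻¹)`. -/
noncomputable def kloosterman (F : Type) [Field F] [Fintype F] [DecidableEq F]
    (ψ : AddChar F ℂ) (a : F) : ℂ :=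
  ∑ α ∈ Finset.univ.filter (fun α : F => α ≠ 0), ψ (α + a * α⁻¹)

section Matrices

variable {F : Type} [Field F]

lemma matJ_mul_matJ : matJ F * matJ F = 1 := by
  ext i j
  fin_cases i <;> fin_cases j <;> simp [matJ, mul_apply, Fin.sum_univ_succ, one_apply]

lemma transpose_matJ : (matJ F)ᵀ = matJ F := by
  ext i j
  fin_cases i <;> fin_cases j <;> rfl

lemma det_matJ : (matJ F).det = -1 := by
  simp [matJ, det_fin_three]

lemma transpose_mul_matJ_mul_apply (w : Matrix (Fin 3) (Fin 3) F) (i j : Fin 3) :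
    (wᵀ * matJ F * w) i j = w 0 i * w 1 j + w 1 i * w 0 j + w 2 i * w 2 j := by
  simp [mul_apply, matJ, Fin.sum_univ_succ]
  ring

lemma det_ne_zero_of_transpose_mul_matJ_mul {w : Matrix (Fin 3) (Fin 3) F}
    (hw : wᵀ * matJ F * w = matJ F) : w.det ≠ 0 := by
  intro h
  have := congrArg det hw
  rw [det_mul, det_mul, det_transpose, h, det_matJ] at this
  norm_num at this

lemma transpose_mul_matJ_mul_mul {u v : Matrix (Fin 3) (Fin 3) F}
    (hu : uᵀ * matJ F * u = matJ F) (hv : vᵀ * matJ F * v = matJ F) :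
    (u * v)ᵀ * matJ F * (u * v) = matJ F := by
  calc (u * v)ᵀ * matJ F * (u * v) = vᵀ * (uᵀ * matJ F * u) * v := by
        simp only [transpose_mul, Matrix.mul_assoc]
    _ = matJ F := by rw [hu, hv]

lemma transpose_matJ_mul_matJ_mul_matJ : (matJ F)ᵀ * matJ F * matJ F = matJ F := by
  rw [transpose_matJ, matJ_mul_matJ, Matrix.one_mul]

def borelMat (a t e : F) : Matrix (Fin 3) (Fin 3) F :=
  !![a, a * t ^ 2, -(a * t * e); 0, a⁻¹, 0; 0, t, e]

def bigCellMat (s a t e : F) : Matrix (Fin 3) (Fin 3) F :=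
  borelMat 1 s 1 * matJ F * borelMat a t e

lemma trace_borelMat (a t e : F) : (borelMat a t e).trace = a + a⁻¹ + e := by
  simp [borelMat, trace_fin_three]

lemma eq_of_borelMat_eq {a t e a' t' e' : F} (h : borelMat a t e = borelMat a' t' e') :
    a = a' ∧ t = t' ∧ e = e' :=
  ⟨by simpa [borelMat] using congrFun (congrFun h 0) 0,
    by simpa [borelMat] using congrFun (congrFun h 2) 1,
    by simpa [borelMat] using congrFun (congrFun h 2) 2⟩

lemma bigCellMat_apply_one_zero (s a t e : F) : bigCellMat s a t e 1 0 = a := by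
  simp [bigCellMat, borelMat, matJ, mul_apply, Fin.sum_univ_succ]

lemma bigCellMat_apply_two_zero (s a t e : F) : bigCellMat s a t e 2 0 = s * a := by
  simp [bigCellMat, borelMat, matJ, mul_apply, Fin.sum_univ_succ]

end Matrices

section CharThree

variable {F : Type} [Field F] [CharP F 3]

lemma borelMat_mem {a e : F} (t : F) (ha : a ≠ 0) (he : e * e = 1) :
    (borelMat a t e)ᵀ * matJ F * borelMat a t e = matJ F := by
  ext i j
  rw [transpose_mul_matJ_mul_apply]
  fin_cases i <;> fin_cases j <;> simp [borelMat, matJ, ha, he] <;> field_simp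
  all_goals first | ring1 | linear_combination t ^ 2 * CharP.ofNat_eq_zero F 3

lemma borelMat_one_mul_borelMat_one_neg (s : F) :
    borelMat 1 s 1 * borelMat 1 (-s) 1 = 1 := by
  ext i j
  fin_cases i <;> fin_cases j <;> simp [borelMat, mul_apply, Fin.sum_univ_succ, one_apply]
  all_goals first | ring1 | linear_combination s ^ 2 * CharP.ofNat_eq_zero F 3

lemma matJ_mul_borelMat_one_neg_mul_bigCellMat (s a t e : F) :
    matJ F * borelMat 1 (-s) 1 * bigCellMat s a t e = borelMat a t e := by
  have := borelMat_one_mul_borelMat_one_neg (-s)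
  rw [neg_neg] at this
  calc matJ F * borelMat 1 (-s) 1 * bigCellMat s a t e
      = matJ F * (borelMat 1 (-s) 1 * borelMat 1 s 1) * matJ F * borelMat a t e := by
        simp only [bigCellMat, Matrix.mul_assoc]
    _ = borelMat a t e := by rw [this, Matrix.mul_one, matJ_mul_matJ, Matrix.one_mul]

lemma eq_of_bigCellMat_eq {s a t e s' a' t' e' : F} (ha : a ≠ 0)
    (h : bigCellMat s a t e = bigCellMat s' a' t' e') :
    s = s' ∧ a = a' ∧ t = t' ∧ e = e' := by
  have ha' : a = a' := by
    simpa only [bigCellMat_apply_one_zero] using congrFun (congrFun h 1) 0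
  have hs : s = s' := by
    have := congrFun (congrFun h 2) 0
    rw [bigCellMat_apply_two_zero, bigCellMat_apply_two_zero, ← ha'] at this
    exact mul_right_cancel₀ ha this
  subst ha' hs
  have hb := congrArg (matJ F * borelMat 1 (-s) 1 * ·) h
  simp only [matJ_mul_borelMat_one_neg_mul_bigCellMat] at hb
  exact ⟨rfl, eq_of_borelMat_eq hb⟩

lemma bigCellMat_mem {a e : F} (s t : F) (ha : a ≠ 0) (he : e * e = 1) :
    (bigCellMat s a t e)ᵀ * matJ F * bigCellMat s a t e = matJ F :=
  transpose_mul_matJ_mul_mul (transpose_mul_matJ_mul_mul (borelMat_mem s one_ne_zero (one_mul 1))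
    transpose_matJ_mul_matJ_mul_matJ) (borelMat_mem t ha he)

lemma trace_bigCellMat {e : F} (s a t : F) (he : e * e = 1) :
    (bigCellMat s a t e).trace = a * (s + e * t) ^ 2 + e := by
  simp [bigCellMat, borelMat, matJ, trace_fin_three]
  linear_combination (-(a * t ^ 2)) * he - a * s * e * t * CharP.ofNat_eq_zero F 3

lemma exists_eq_borelMat {w : Matrix (Fin 3) (Fin 3) F} (hw : wᵀ * matJ F * w = matJ F)
    (h10 : w 1 0 = 0) : ∃ a t e, a ≠ 0 ∧ e * e = 1 ∧ w = borelMat a t e := by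
  have E (i j : Fin 3) : w 0 i * w 1 j + w 1 i * w 0 j + w 2 i * w 2 j = matJ F i j := by
    rw [← transpose_mul_matJ_mul_apply, hw]
  have E00 := E 0 0; have E01 := E 0 1; have E02 := E 0 2
  have E11 := E 1 1; have E12 := E 1 2; have E22 := E 2 2
  simp [matJ, h10] at E00 E01 E02 E11 E12 E22
  simp only [E00, zero_mul, add_zero] at E01 E02
  have ha : w 0 0 ≠ 0 := left_ne_zero_of_mul_eq_one E01
  have h11 : w 1 1 = (w 0 0)⁻¹ := (inv_eq_of_mul_eq_one_right E01).symm
  have h12 : w 1 2 = 0 := (mul_eq_zero.mp E02).resolve_left ha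
  have h01 : w 0 1 = w 0 0 * w 2 1 ^ 2 := by
    linear_combination (-w 0 0) * E11 - w 0 1 * E01 +
      w 0 0 * w 0 1 * w 1 1 * CharP.ofNat_eq_zero F 3
  have h02 : w 0 2 = -(w 0 0 * w 2 1 * w 2 2) := by
    linear_combination w 0 0 * E12 - w 0 2 * E01 - w 0 0 * w 0 1 * h12
  refine ⟨w 0 0, w 2 1, w 2 2, ha, by simpa [h12] using E22, ?_⟩
  ext i j
  fin_cases i <;> fin_cases j <;> simp [borelMat, h10, E00, h11, h12, h01, h02]

lemma exists_eq_bigCellMat {w : Matrix (Fin 3) (Fin 3) F} (hw : wᵀ * matJ F * w = matJ F)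
    (h10 : w 1 0 ≠ 0) : ∃ s a t e, a ≠ 0 ∧ e * e = 1 ∧ w = bigCellMat s a t e := by
  -- `s` is chosen so that `matJ F * borelMat 1 (-s) 1 * w` fixes the isotropic line `F e₀`.
  set s := w 2 0 / w 1 0
  have hs : s * w 1 0 = w 2 0 := div_mul_cancel₀ _ h10
  set w' := matJ F * borelMat 1 (-s) 1 * w with hw'_def
  have hw' : w'ᵀ * matJ F * w' = matJ F :=
    transpose_mul_matJ_mul_mul (transpose_mul_matJ_mul_mul transpose_matJ_mul_matJ_mul_matJ
      (borelMat_mem (-s) one_ne_zero (one_mul 1))) hw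
  have h10' : w' 1 0 = 0 := by
    have E00 : 2 * w 0 0 * w 1 0 + w 2 0 * w 2 0 = 0 := by
      have := transpose_mul_matJ_mul_apply w 0 0
      rw [hw] at this
      simpa [matJ, two_mul, add_mul, mul_comm (w 1 0)] using this.symm
    have key : (w 0 0 + s ^ 2 * w 1 0 + s * w 2 0) * w 1 0 = 0 := by
      linear_combination 2 * E00 + (s * w 1 0 + 2 * w 2 0) * hs -
        w 0 0 * w 1 0 * CharP.ofNat_eq_zero F 3
    simp [w', matJ, borelMat, vecMul, dotProduct, Fin.sum_univ_succ]
    linear_combination (mul_eq_zero.mp key).resolve_right h10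
  obtain ⟨a, t, e, ha, he, h⟩ := exists_eq_borelMat hw' h10'
  refine ⟨s, a, t, e, ha, he, ?_⟩
  calc w = borelMat 1 s 1 * (matJ F * matJ F) * borelMat 1 (-s) 1 * w := by
        rw [matJ_mul_matJ, Matrix.mul_one, borelMat_one_mul_borelMat_one_neg, Matrix.one_mul]
    _ = bigCellMat s a t e := by
        rw [bigCellMat, ← h, hw'_def]
        simp only [Matrix.mul_assoc]

end CharThree

section Sums

variable {F : Type} [Field F] [Fintype F] [DecidableEq F]

lemma sum_sum_addChar_mul_sq {R : Type*} [CommRing R] [IsDomain R] {ψ : AddChar F R}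
    (hψ : ψ ≠ 1) : ∑ x : F, ∑ a ∈ univ.filter (· ≠ 0), ψ (a * x ^ 2) = 0 := by
  have hne (c : F) : ∑ a ∈ univ.filter (· ≠ 0), ψ (a * c) = ∑ a, ψ (a * c) - 1 := by
    rw [filter_ne' univ 0, sum_erase_eq_sub (mem_univ 0), zero_mul, AddChar.map_zero_eq_one]
  simp_rw [hne, AddChar.sum_mulShift _ (AddChar.IsPrimitive.of_ne_one hψ),
    pow_eq_zero_iff two_ne_zero]
  simp [sum_sub_distrib]

lemma sum_borelMat_trace (hF : ringChar F ≠ 2) (ψ : AddChar F ℂ) :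
    ∑ a ∈ univ.filter (· ≠ 0), ∑ t : F, ∑ e ∈ ({1, -1} : Finset F), ψ (borelMat a t e).trace
      = (ψ 1 + ψ (-1)) * Fintype.card F * kloosterman F ψ 1 := by
  have h : (1 : F) ≠ -1 := (Ring.neg_one_ne_one_of_char_ne_two hF).symm
  simp only [trace_borelMat, AddChar.map_add_eq_mul, sum_pair h, sum_const, card_univ,
    kloosterman, one_mul, mul_sum, nsmul_eq_mul]
  refine sum_congr rfl fun a _ => ?_
  ring

variable [CharP F 3]

lemma sum_bigCellMat_trace {ψ : AddChar F ℂ} (hψ : ψ ≠ 1) :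
    ∑ t : F, ∑ e ∈ ({1, -1} : Finset F), ∑ s : F, ∑ a ∈ univ.filter (· ≠ 0),
      ψ (bigCellMat s a t e).trace = 0 := by
  refine sum_eq_zero fun t _ => sum_eq_zero fun e he => ?_
  have he : e * e = 1 := mul_self_eq_one_iff.mpr (by simpa using he)
  calc ∑ s : F, ∑ a ∈ univ.filter (· ≠ 0), ψ (bigCellMat s a t e).trace
      = (∑ s : F, ∑ a ∈ univ.filter (· ≠ 0), ψ (a * (s + e * t) ^ 2)) * ψ e := by
        simp only [trace_bigCellMat _ _ _ he, AddChar.map_add_eq_mul, sum_mul]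
    _ = (∑ x : F, ∑ a ∈ univ.filter (· ≠ 0), ψ (a * x ^ 2)) * ψ e :=
        congrArg (· * ψ e) <|
          Equiv.sum_comp (Equiv.addRight (e * t)) fun x => ∑ a ∈ univ.filter (· ≠ 0), ψ (a * x ^ 2)
    _ = 0 := by rw [sum_sum_addChar_mul_sq hψ, zero_mul]

end Sums

section Parametrization

variable {F : Type} [Field F] [Fintype F] [DecidableEq F] [CharP F 3] {M : Type*}
  [AddCommMonoid M] (f : Matrix (Fin 3) (Fin 3) F → M)

lemma sum_borel_eq :
    ∑ w ∈ univ.filter (fun w : Matrix (Fin 3) (Fin 3) F => wᵀ * matJ F * w = matJ F ∧ w 1 0 = 0),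
      f w = ∑ a ∈ univ.filter (· ≠ 0), ∑ t : F, ∑ e ∈ ({1, -1} : Finset F), f (borelMat a t e) := by
  simp only [← sum_product']
  symm
  refine sum_nbij (fun p => borelMat p.1 p.2.1 p.2.2) ?_ ?_ ?_ fun _ _ => rfl
  · rintro ⟨a, t, e⟩ hp
    simp only [mem_product, mem_filter, mem_univ, true_and, mem_insert, mem_singleton] at hp ⊢
    exact ⟨borelMat_mem t hp.1 (mul_self_eq_one_iff.mpr hp.2), by simp [borelMat]⟩
  · rintro ⟨a, t, e⟩ _ ⟨a', t', e'⟩ _ h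
    obtain ⟨rfl, rfl, rfl⟩ := eq_of_borelMat_eq h
    rfl
  · intro w hw
    obtain ⟨-, hw, h10⟩ := mem_filter.mp (mem_coe.mp hw)
    obtain ⟨a, t, e, ha, he, rfl⟩ := exists_eq_borelMat hw h10
    exact ⟨(a, t, e), by simpa [ha] using mul_self_eq_one_iff.mp he, rfl⟩

lemma sum_bigCell_eq :
    ∑ w ∈ univ.filter (fun w : Matrix (Fin 3) (Fin 3) F => wᵀ * matJ F * w = matJ F ∧ w 1 0 ≠ 0),
      f w = ∑ t : F, ∑ e ∈ ({1, -1} : Finset F), ∑ s : F, ∑ a ∈ univ.filter (· ≠ 0),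
        f (bigCellMat s a t e) := by
  simp only [← sum_product']
  symm
  refine sum_nbij (fun p => bigCellMat p.2.2.1 p.2.2.2 p.1 p.2.1) ?_ ?_ ?_ fun _ _ => rfl
  · rintro ⟨t, e, s, a⟩ hp
    simp only [mem_product, mem_filter, mem_univ, true_and, mem_insert, mem_singleton] at hp ⊢
    exact ⟨bigCellMat_mem s t hp.2 (mul_self_eq_one_iff.mpr hp.1),
      by rw [bigCellMat_apply_one_zero]; exact hp.2⟩
  · rintro ⟨t, e, s, a⟩ hp ⟨t', e', s', a'⟩ _ h
    simp only [coe_product, Set.mem_prod, coe_filter, mem_univ, true_and] at hp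
    obtain ⟨rfl, rfl, rfl, rfl⟩ := eq_of_bigCellMat_eq hp.2.2.2 h
    rfl
  · intro w hw
    obtain ⟨-, hw, h10⟩ := mem_filter.mp (mem_coe.mp hw)
    obtain ⟨s, a, t, e, ha, he, rfl⟩ := exists_eq_bigCellMat hw h10
    exact ⟨(t, e, s, a), by simpa [ha] using mul_self_eq_one_iff.mp he, rfl⟩

end Parametrization

theorem gauss_sum_O3_general (r : ℕ) (F : Type) [Field F] [Fintype F] [DecidableEq F]
    (hF : Fintype.card F = 3 ^ r) (ψ : AddChar F ℂ) (hψ : ψ ≠ 1) :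
    ∑ w ∈ Finset.univ.filter
        (fun w : Matrix (Fin 3) (Fin 3) F =>
          w.det ≠ 0 ∧ wᵀ * matJ F * w = matJ F),
      ψ w.trace
      = (ψ 1 + ψ (-1)) * (3 ^ r : ℂ) * kloosterman F ψ 1 := by
  have : CharP F 3 := charP_of_card_eq_prime_pow hF
  have hchar : ringChar F ≠ 2 := by rw [ringChar.eq F 3]; decide
  have hcard : (3 ^ r : ℂ) = Fintype.card F := by rw [hF]; push_cast; rfl
  have hO : univ.filter (fun w : Matrix (Fin 3) (Fin 3) F => w.det ≠ 0 ∧ wᵀ * matJ F * w = matJ F)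
      = univ.filter (fun w => wᵀ * matJ F * w = matJ F) :=
    filter_congr fun _ _ => and_iff_right_of_imp det_ne_zero_of_transpose_mul_matJ_mul
  rw [hO, ← sum_filter_add_sum_filter_not _ (fun w => w 1 0 = 0), filter_filter, filter_filter,
    sum_borel_eq, sum_bigCell_eq, sum_borelMat_trace hchar, sum_bigCellMat_trace hψ, add_zero,
    hcard]

/-- Gauss sum for O(3,q): `∑_{w ∈ O(3,q)} ψ(Tr w) = (ψ(1)+ψ(-1))·q·K(ψ;1)`, where q = 3^r. -/
theorem gauss_sum_O3 (r : ℕ) (hr : 0 < r) (F : Type) [Field F] [Fintype F] [DecidableEq F]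
    (hF : Fintype.card F = 3 ^ r) (ψ : AddChar F ℂ) (hψ : ψ ≠ 1) :
    ∑ w ∈ Finset.univ.filter
        (fun w : Matrix (Fin 3) (Fin 3) F =>
          w.det ≠ 0 ∧ wᵀ * matJ F * w = matJ F),
      ψ w.trace
      = (ψ 1 + ψ (-1)) * (3 ^ r : ℂ) * kloosterman F ψ 1 :=
  gauss_sum_O3_general r F hF ψ hψ
end

section
/- Let λ be the canonical additive character of F_q and let a ∈ F_q^*. Then ∑_{w∈SO(3,q)} λ(a·Tr w) = λ(a)·q·K(λ;a²), where Tr denotes the matrix trace. -/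
open Finset Matrix

/-- The canonical additive character `λ(x) = e^{2πi·tr(x)/3}` of a finite field of
characteristic 3, where tr is the absolute trace to F_3. -/
noncomputable def canChar (F : Type) [Field F] [Fintype F] [Algebra (ZMod 3) F] (x : F) : ℂ :=
  Complex.exp (2 * Real.pi * Complex.I * ((Algebra.trace (ZMod 3) F x).val : ℂ) / 3)

/-- The Kloosterman sum `K(λ;a) = ∑_{α ∈ F^*} λ(α + a·α⁻¹)` for the canonical character. -/
noncomputable def kloos (F : Type) [Field F] [Fintype F] [DecidableEq F]
    [Algebra (ZMod 3) F] (a : F) : ℂ :=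
  ∑ α ∈ Finset.univ.filter (fun α : F => α ≠ 0), canChar F (α + a * α⁻¹)

/-!
In characteristic 3 the form `2 x₀ x₁ + x₂²` of `J` makes `u(c) = !![1, c², c; 0, 1, 0; 0, -c, 1]`
an additive one-parameter subgroup of `SO(3,q)`, and `SO(3,q)` has the Bruhat decomposition
`B ⊔ U s B`, where `B = {diag(t, t⁻¹, 1) u(c)}` is the stabiliser of the isotropic line `⟨e₀⟩`
and `s` is a Weyl element. Since `w e₀` is isotropic, it lies on `⟨e₀⟩` iff `w 1 0 = 0`;
otherwise it is `u(c) s` applied to a multiple of `e₀` for a unique `c`.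

On `B` the trace is `t + t⁻¹ + 1`, so `B` contributes `q λ(a) ∑_{t ≠ 0} λ(at + at⁻¹)`, which is
`q λ(a) K(λ; a²)` after substituting `α = at`. By cyclicity of the trace,
`Tr(u(c) s diag(t, t⁻¹, 1) u(d)) = Tr(s diag(t, t⁻¹, 1) u(c + d)) = t (c + d)² - 1`, so the big cell
contributes `q λ(-a) ∑_d ∑_{t ≠ 0} λ(t a d²)`, and this vanishes because the inner sum is `q - 1`
for `d = 0` and `-1` otherwise.
-/

section Character

variable (F : Type) [Field F] [Fintype F] [Algebra (ZMod 3) F]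

noncomputable def canAddChar : AddChar F ℂ :=
  ZMod.stdAddChar.compAddMonoidHom (Algebra.trace (ZMod 3) F).toAddMonoidHom

variable {F}

lemma canAddChar_apply (x : F) : canAddChar F x = canChar F x := by
  simp [canAddChar, canChar, ZMod.stdAddChar_apply, ZMod.toCircle_apply]

lemma isPrimitive_canAddChar : (canAddChar F).IsPrimitive := by
  refine AddChar.IsPrimitive.of_ne_one (AddChar.ne_one_iff.2 ?_)
  obtain ⟨x, hx⟩ := Algebra.trace_surjective (ZMod 3) F 1
  refine ⟨x, fun h => ?_⟩
  rw [canAddChar, AddChar.compAddMonoidHom_apply, LinearMap.toAddMonoidHom_coe, hx,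
    ← AddChar.map_zero_eq_one (ZMod.stdAddChar (N := 3)), ZMod.injective_stdAddChar.eq_iff] at h
  exact one_ne_zero h

lemma canChar_add (x y : F) : canChar F (x + y) = canChar F x * canChar F y := by
  simp only [← canAddChar_apply, AddChar.map_add_eq_mul]

lemma canChar_zero : canChar F 0 = 1 := by
  rw [← canAddChar_apply, AddChar.map_zero_eq_one]

lemma sum_canChar_mul [DecidableEq F] (b : F) :
    ∑ x : F, canChar F (x * b) = if b = 0 then (Fintype.card F : ℂ) else 0 := by
  simp only [← canAddChar_apply, AddChar.sum_mulShift b isPrimitive_canAddChar]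
  split_ifs <;> simp

end Character

section Matrices

variable {F : Type} [Field F]

def specialOrthogonalJ (F : Type) [Field F] : Submonoid (Matrix (Fin 3) (Fin 3) F) where
  carrier := {w | wᵀ * matJ F * w = matJ F ∧ w.det = 1}
  mul_mem' {v w} hv hw := by
    refine ⟨?_, by rw [det_mul, hv.2, hw.2, one_mul]⟩
    calc (v * w)ᵀ * matJ F * (v * w) = wᵀ * (vᵀ * matJ F * v) * w := by
          simp only [transpose_mul, Matrix.mul_assoc]
      _ = matJ F := by rw [hv.1, hw.1]
  one_mem' := by simp

instance [DecidableEq F] : DecidablePred (· ∈ specialOrthogonalJ F) := fun w =>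
  inferInstanceAs (Decidable (wᵀ * matJ F * w = matJ F ∧ w.det = 1))

lemma cols_pairing_eq_matJ_apply {w : Matrix (Fin 3) (Fin 3) F} (hw : w ∈ specialOrthogonalJ F)
    (i j : Fin 3) : w 0 i * w 1 j + w 1 i * w 0 j + w 2 i * w 2 j = matJ F i j := by
  conv_rhs => rw [← hw.1]
  simp only [mul_apply, Fin.sum_univ_three, transpose_apply]
  fin_cases i <;> fin_cases j <;> simp [matJ] <;> ring

def torusElem (t : F) : Matrix (Fin 3) (Fin 3) F := !![t, 0, 0; 0, t⁻¹, 0; 0, 0, 1]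

def unipotentElem (c : F) : Matrix (Fin 3) (Fin 3) F := !![1, c ^ 2, c; 0, 1, 0; 0, -c, 1]

def weylElem : Matrix (Fin 3) (Fin 3) F := !![0, 1, 0; 1, 0, 0; 0, 0, -1]

lemma torusElem_mem {t : F} (ht : t ≠ 0) : torusElem t ∈ specialOrthogonalJ F := by
  refine ⟨?_, by simp [torusElem, det_fin_three, ht]⟩
  ext i j
  fin_cases i <;> fin_cases j <;> simp [torusElem, matJ, mul_apply, Fin.sum_univ_three, ht]

lemma weylElem_mem : (weylElem : Matrix (Fin 3) (Fin 3) F) ∈ specialOrthogonalJ F := by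
  refine ⟨?_, by simp [weylElem, det_fin_three]⟩
  ext i j
  fin_cases i <;> fin_cases j <;> simp [weylElem, matJ, mul_apply, Fin.sum_univ_three]

lemma weylElem_mul_self : (weylElem : Matrix (Fin 3) (Fin 3) F) * weylElem = 1 := by
  ext i j
  fin_cases i <;> fin_cases j <;> simp [weylElem, mul_apply, Fin.sum_univ_three, one_apply]

lemma unipotentElem_zero : (unipotentElem 0 : Matrix (Fin 3) (Fin 3) F) = 1 := by
  ext i j
  fin_cases i <;> fin_cases j <;> simp [unipotentElem, one_apply]

lemma torusElem_mul_unipotentElem (t c : F) :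
    torusElem t * unipotentElem c = !![t, t * c ^ 2, t * c; 0, t⁻¹, 0; 0, -c, 1] := by
  ext i j
  fin_cases i <;> fin_cases j <;>
    simp [torusElem, unipotentElem, mul_apply, Fin.sum_univ_three]

lemma trace_torusElem_mul_unipotentElem (t c : F) :
    (torusElem t * unipotentElem c).trace = t + t⁻¹ + 1 := by
  simp [torusElem_mul_unipotentElem, trace_fin_three]

lemma trace_weylElem_mul_torusElem_mul_unipotentElem (t c : F) :
    (weylElem * (torusElem t * unipotentElem c)).trace = t * c ^ 2 - 1 := by
  simp [torusElem_mul_unipotentElem, weylElem, trace_fin_three]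
  ring

variable [CharP F 3]

lemma unipotentElem_mem (c : F) : unipotentElem c ∈ specialOrthogonalJ F := by
  have h3 : (3 : F) = 0 := CharP.ofNat_eq_zero F 3
  refine ⟨?_, by simp [unipotentElem, det_fin_three]⟩
  ext i j
  fin_cases i <;> fin_cases j <;> simp [unipotentElem, matJ, mul_apply, Fin.sum_univ_three]
  linear_combination c ^ 2 * h3

lemma unipotentElem_mul (c d : F) :
    unipotentElem c * unipotentElem d = unipotentElem (c + d) := by
  have h3 : (3 : F) = 0 := CharP.ofNat_eq_zero F 3
  have hsq : (c + d) ^ 2 = c ^ 2 - c * d + d ^ 2 := by linear_combination c * d * h3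
  ext i j
  fin_cases i <;> fin_cases j <;> simp [unipotentElem, mul_apply, Fin.sum_univ_three, hsq]
  all_goals ring

lemma trace_unipotentElem_mul_weylElem_mul (c t d : F) :
    (unipotentElem c * weylElem * (torusElem t * unipotentElem d)).trace = t * (d + c) ^ 2 - 1 := by
  rw [Matrix.mul_assoc, trace_mul_comm, Matrix.mul_assoc, Matrix.mul_assoc, unipotentElem_mul,
    trace_weylElem_mul_torusElem_mul_unipotentElem]

lemma weylElem_mul_unipotentElem_mul_cancel (c : F) (v : Matrix (Fin 3) (Fin 3) F) :
    weylElem * unipotentElem (-c) * (unipotentElem c * weylElem * v) = v := by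
  calc _ = weylElem * (unipotentElem (-c) * unipotentElem c) * weylElem * v := by
        simp only [Matrix.mul_assoc]
    _ = v := by
      rw [unipotentElem_mul, neg_add_cancel, unipotentElem_zero, Matrix.mul_one,
        weylElem_mul_self, Matrix.one_mul]

lemma unipotentElem_mul_weylElem_mul_cancel (c : F) (w : Matrix (Fin 3) (Fin 3) F) :
    unipotentElem (-c) * weylElem * (weylElem * unipotentElem c * w) = w := by
  calc _ = unipotentElem (-c) * (weylElem * weylElem) * unipotentElem c * w := by
        simp only [Matrix.mul_assoc]
    _ = w := by
      rw [weylElem_mul_self, Matrix.mul_one, unipotentElem_mul, neg_add_cancel,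
        unipotentElem_zero, Matrix.one_mul]

lemma sq_apply_two_zero {w : Matrix (Fin 3) (Fin 3) F} (hw : w ∈ specialOrthogonalJ F) :
    w 2 0 ^ 2 = w 0 0 * w 1 0 := by
  have h3 : (3 : F) = 0 := CharP.ofNat_eq_zero F 3
  have e00 : w 0 0 * w 1 0 + w 1 0 * w 0 0 + w 2 0 * w 2 0 = 0 := cols_pairing_eq_matJ_apply hw 0 0
  linear_combination e00 - w 0 0 * w 1 0 * h3

lemma eq_torusElem_mul_unipotentElem {w : Matrix (Fin 3) (Fin 3) F}
    (hw : w ∈ specialOrthogonalJ F) (h10 : w 1 0 = 0) :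
    w 0 0 ≠ 0 ∧ w = torusElem (w 0 0) * unipotentElem (-w 2 1) := by
  have h3 : (3 : F) = 0 := CharP.ofNat_eq_zero F 3
  have e01 : w 0 0 * w 1 1 + w 1 0 * w 0 1 + w 2 0 * w 2 1 = 1 := cols_pairing_eq_matJ_apply hw 0 1
  have e02 : w 0 0 * w 1 2 + w 1 0 * w 0 2 + w 2 0 * w 2 2 = 0 := cols_pairing_eq_matJ_apply hw 0 2
  have e11 : w 0 1 * w 1 1 + w 1 1 * w 0 1 + w 2 1 * w 2 1 = 0 := cols_pairing_eq_matJ_apply hw 1 1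
  have e12 : w 0 1 * w 1 2 + w 1 1 * w 0 2 + w 2 1 * w 2 2 = 0 := cols_pairing_eq_matJ_apply hw 1 2
  have hdet := hw.2
  rw [det_fin_three] at hdet
  have h20 : w 2 0 = 0 :=
    pow_eq_zero_iff two_ne_zero |>.mp (by rw [sq_apply_two_zero hw, h10, mul_zero])
  have h1 : w 0 0 * w 1 1 = 1 := by linear_combination e01 - w 0 1 * h10 - w 2 1 * h20
  have h00 : w 0 0 ≠ 0 := left_ne_zero_of_mul_eq_one h1
  have h11 : w 1 1 = (w 0 0)⁻¹ := eq_inv_of_mul_eq_one_left (by linear_combination h1)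
  have h12 : w 1 2 = 0 := by
    refine (mul_eq_zero.mp ?_).resolve_left h00
    linear_combination e02 - w 0 2 * h10 - w 2 2 * h20
  have h22 : w 2 2 = 1 := by
    linear_combination hdet + w 0 0 * w 2 1 * h12 + w 0 1 * w 2 2 * h10 -
      w 0 1 * w 1 2 * h20 - w 0 2 * w 2 1 * h10 + w 0 2 * w 1 1 * h20 - w 2 2 * h1
  have h01 : w 0 1 = w 0 0 * w 2 1 ^ 2 := by
    linear_combination (-(w 0 0)) * e11 - w 0 1 * h1 + (w 0 0 * w 0 1 * w 1 1) * h3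
  have h02 : w 0 2 = -(w 0 0 * w 2 1) := by
    linear_combination w 0 0 * e12 - w 0 0 * w 0 1 * h12 - w 0 0 * w 2 1 * h22 - w 0 2 * h1
  refine ⟨h00, ?_⟩
  rw [torusElem_mul_unipotentElem]
  ext i j
  fin_cases i <;> fin_cases j <;> simp [h01, h02, h10, h11, h12, h20, h22]

variable [Fintype F] [DecidableEq F]

lemma sum_borelCell {M : Type*} [AddCommMonoid M] (g : Matrix (Fin 3) (Fin 3) F → M) :
    ∑ w ∈ univ.filter (fun w => w ∈ specialOrthogonalJ F ∧ w 1 0 = 0), g w =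
      ∑ t ∈ univ.filter (· ≠ 0), ∑ c, g (torusElem t * unipotentElem c) := by
  rw [← sum_product']
  symm
  refine sum_nbij' (fun p => torusElem p.1 * unipotentElem p.2) (fun w => (w 0 0, -w 2 1))
    ?_ ?_ ?_ ?_ (fun _ _ => rfl)
  · simp only [mem_product, mem_filter, mem_univ, true_and, and_true]
    rintro ⟨t, c⟩ ht
    refine ⟨mul_mem (torusElem_mem ht) (unipotentElem_mem c), ?_⟩
    simp [torusElem_mul_unipotentElem]
  · simp only [mem_product, mem_filter, mem_univ, true_and, and_true]
    rintro w ⟨hw, h10⟩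
    exact (eq_torusElem_mul_unipotentElem hw h10).1
  · rintro ⟨t, c⟩ -
    simp [torusElem_mul_unipotentElem]
  · simp only [mem_filter, mem_univ, true_and]
    rintro w ⟨hw, h10⟩
    exact (eq_torusElem_mul_unipotentElem hw h10).2.symm

lemma sum_bigCell {M : Type*} [AddCommMonoid M] (g : Matrix (Fin 3) (Fin 3) F → M) :
    ∑ w ∈ univ.filter (fun w => w ∈ specialOrthogonalJ F ∧ w 1 0 ≠ 0), g w =
      ∑ c, ∑ v ∈ univ.filter (fun v => v ∈ specialOrthogonalJ F ∧ v 1 0 = 0),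
        g (unipotentElem c * weylElem * v) := by
  have h3 : (3 : F) = 0 := CharP.ofNat_eq_zero F 3
  have first_col (c : F) (v : Matrix (Fin 3) (Fin 3) F) :
      (unipotentElem c * weylElem * v : Matrix (Fin 3) (Fin 3) F) 1 0 = v 0 0 ∧
        (unipotentElem c * weylElem * v : Matrix (Fin 3) (Fin 3) F) 2 0 = -(c * v 0 0) - v 2 0 := by
    simp [unipotentElem, weylElem, mul_apply, Fin.sum_univ_three]
    ring
  rw [← sum_product']
  symm
  refine sum_nbij' (fun p => unipotentElem p.1 * weylElem * p.2)
    (fun w => (-(w 2 0 / w 1 0), weylElem * unipotentElem (w 2 0 / w 1 0) * w))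
    ?_ ?_ ?_ ?_ (fun _ _ => rfl)
  · simp only [mem_product, mem_filter, mem_univ, true_and]
    rintro ⟨c, v⟩ ⟨hv, h10⟩
    refine ⟨mul_mem (mul_mem (unipotentElem_mem c) weylElem_mem) hv, ?_⟩
    rw [(first_col c v).1]
    exact (eq_torusElem_mul_unipotentElem hv h10).1
  · simp only [mem_product, mem_filter, mem_univ, true_and]
    rintro w ⟨hw, h10⟩
    refine ⟨mul_mem (mul_mem weylElem_mem (unipotentElem_mem _)) hw, ?_⟩
    have hsq := sq_apply_two_zero hw
    simp [unipotentElem, weylElem, mul_apply, Fin.sum_univ_three]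
    field_simp
    linear_combination 2 * hsq + w 0 0 * w 1 0 * h3
  · simp only [mem_product, mem_filter, mem_univ, true_and]
    rintro ⟨c, v⟩ ⟨hv, h10⟩
    dsimp only at hv h10
    have h00 := (eq_torusElem_mul_unipotentElem hv h10).1
    have h20 : v 2 0 = 0 :=
      pow_eq_zero_iff two_ne_zero |>.mp (by rw [sq_apply_two_zero hv, h10, mul_zero])
    rw [(first_col c v).1, (first_col c v).2, h20, sub_zero, neg_div, mul_div_cancel_right₀ c h00]
    exact Prod.ext (neg_neg c) (weylElem_mul_unipotentElem_mul_cancel c v)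
  · rintro w -
    exact unipotentElem_mul_weylElem_mul_cancel _ w

lemma sum_specialOrthogonalJ {M : Type*} [AddCommMonoid M] (g : Matrix (Fin 3) (Fin 3) F → M) :
    ∑ w ∈ univ.filter (· ∈ specialOrthogonalJ F), g w =
      ∑ t ∈ univ.filter (· ≠ 0), ∑ c, g (torusElem t * unipotentElem c) +
        ∑ c, ∑ t ∈ univ.filter (· ≠ 0), ∑ d,
          g (unipotentElem c * weylElem * (torusElem t * unipotentElem d)) := by
  rw [← sum_filter_add_sum_filter_not _ (fun w => w 1 0 = 0), filter_filter, filter_filter,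
    sum_borelCell, sum_bigCell]
  simp only [sum_borelCell]

end Matrices

instance (F : Type) [Field F] [Algebra (ZMod 3) F] : CharP F 3 :=
  charP_of_injective_algebraMap (algebraMap (ZMod 3) F).injective 3

section CharacterSums

variable {F : Type} [Field F] [Fintype F] [DecidableEq F] [Algebra (ZMod 3) F]

lemma sum_ne_zero_canChar_mul (b : F) :
    ∑ t ∈ univ.filter (· ≠ 0), canChar F (t * b) =
      (if b = 0 then (Fintype.card F : ℂ) else 0) - 1 := by
  rw [filter_ne' univ 0, sum_erase_eq_sub (mem_univ 0), sum_canChar_mul, zero_mul, canChar_zero]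

lemma sum_canChar_mul_add_mul_inv_eq_kloos {a : F} (ha : a ≠ 0) :
    ∑ t ∈ univ.filter (· ≠ 0), canChar F (a * t + a * t⁻¹) = kloos F (a ^ 2) := by
  refine sum_nbij' (a * ·) (a⁻¹ * ·) ?_ ?_ ?_ ?_ ?_ <;> simp only [mem_filter, mem_univ, true_and]
  · exact fun t ht => mul_ne_zero ha ht
  · exact fun α hα => mul_ne_zero (inv_ne_zero ha) hα
  · exact fun t _ => inv_mul_cancel_left₀ ha t
  · exact fun α _ => mul_inv_cancel_left₀ ha α
  · intro t ht
    congr 1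
    field_simp

lemma sum_canChar_trace_borelCell {a : F} (ha : a ≠ 0) :
    ∑ t ∈ univ.filter (· ≠ (0 : F)), ∑ c, canChar F (a * (torusElem t * unipotentElem c).trace) =
      canChar F a * Fintype.card F * kloos F (a ^ 2) := by
  have hsplit (t : F) :
      canChar F (a * (t + t⁻¹ + 1)) = canChar F a * canChar F (a * t + a * t⁻¹) := by
    rw [← canChar_add]
    ring_nf
  simp only [trace_torusElem_mul_unipotentElem, hsplit, sum_const, card_univ, nsmul_eq_mul,
    ← mul_sum, sum_canChar_mul_add_mul_inv_eq_kloos ha]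
  ring

lemma sum_canChar_trace_bigCell {a : F} (ha : a ≠ 0) :
    ∑ c, ∑ t ∈ univ.filter (· ≠ (0 : F)), ∑ d,
      canChar F (a * (unipotentElem c * weylElem * (torusElem t * unipotentElem d)).trace) = 0 := by
  have hsplit (t d : F) :
      canChar F (a * (t * d ^ 2 - 1)) = canChar F (t * (a * d ^ 2)) * canChar F (-a) := by
    rw [← canChar_add]
    ring_nf
  have hgauss : ∑ t ∈ univ.filter (· ≠ (0 : F)), ∑ d, canChar F (t * (a * d ^ 2)) = 0 := by
    simp only [sum_comm (s := univ.filter _), sum_ne_zero_canChar_mul, mul_eq_zero, ha, false_or,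
      pow_eq_zero_iff two_ne_zero, sum_sub_distrib, sum_ite_eq', mem_univ, if_true, sum_const,
      card_univ, nsmul_eq_mul, mul_one, sub_self]
  have hshift (c t : F) :
      ∑ d, canChar F (a * (t * (d + c) ^ 2 - 1)) = ∑ d, canChar F (a * (t * d ^ 2 - 1)) :=
    Fintype.sum_equiv (Equiv.addRight c) _ _ fun _ => rfl
  simp only [trace_unipotentElem_mul_weylElem_mul, hshift]
  simp only [hsplit, ← sum_mul, hgauss, zero_mul, sum_const_zero]

end CharacterSums

theorem gauss_sum_SO3_twisted_general (r : ℕ) (F : Type) [Field F] [Fintype F]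
    [DecidableEq F] [Algebra (ZMod 3) F] (hF : Fintype.card F = 3 ^ r)
    (a : F) (ha : a ≠ 0) :
    ∑ w ∈ Finset.univ.filter
        (fun w : Matrix (Fin 3) (Fin 3) F =>
          w.det ≠ 0 ∧ wᵀ * matJ F * w = matJ F ∧ w.det = 1),
      canChar F (a * w.trace)
      = canChar F a * (3 ^ r : ℂ) * kloos F (a ^ 2) := by
  have hSO : univ.filter (fun w : Matrix (Fin 3) (Fin 3) F =>
      w.det ≠ 0 ∧ wᵀ * matJ F * w = matJ F ∧ w.det = 1) = univ.filter (· ∈ specialOrthogonalJ F) :=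
    filter_congr fun w _ => ⟨fun h => h.2, fun h => ⟨h.2.symm ▸ one_ne_zero, h⟩⟩
  rw [hSO, sum_specialOrthogonalJ, sum_canChar_trace_borelCell ha, sum_canChar_trace_bigCell ha,
    add_zero, hF, Nat.cast_pow, Nat.cast_ofNat]

/-- `∑_{w ∈ SO(3,q)} λ(a·Tr w) = λ(a)·q·K(λ;a²)` for the canonical additive character λ
and any a ∈ F_q^*, where q = 3^r. -/
theorem gauss_sum_SO3_twisted (r : ℕ) (hr : 0 < r) (F : Type) [Field F] [Fintype F]
    [DecidableEq F] [Algebra (ZMod 3) F] (hF : Fintype.card F = 3 ^ r)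
    (a : F) (ha : a ≠ 0) :
    ∑ w ∈ Finset.univ.filter
        (fun w : Matrix (Fin 3) (Fin 3) F =>
          w.det ≠ 0 ∧ wᵀ * matJ F * w = matJ F ∧ w.det = 1),
      canChar F (a * w.trace)
      = canChar F a * (3 ^ r : ℂ) * kloos F (a ^ 2) :=
  gauss_sum_SO3_twisted_general r F hF a ha
end

section
/- For G equal to either SO(3,q) or O(3,q), the map F_q → F_3^G sending a to the tuple c(a) = (tr(a·Tr g))_{g∈G} is an injective F_3-linear map (hence an F_3-linear isomorphism of F_q onto its image, the dual code C(G)^⊥). -/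
/-!
The trace form `(a, b) ↦ tr(a b)` of a finite separable extension is nondegenerate, so `c` is
injective as soon as `g ↦ Tr g` maps `G` onto `F_q`. In characteristic 3 the product of the torus
element `diag(t, t⁻¹, 1)`, the element swapping the hyperbolic pair and negating `e₃`, and a
unipotent element with parameter `s` lies in SO(3,q) and has trace `s² / t - 1`, which takes every
value `x`: take `s = t = x + 1` if `x ≠ -1`, and `s = 0, t = 1` otherwise.
-/

open Matrix

section TraceCode

variable {K L ι : Type*}

theorem isLinearMap_trace_mul [CommRing K] [CommRing L] [Algebra K L] (t : ι → L) :
    IsLinearMap K (fun (a : L) (i : ι) => Algebra.trace K L (a * t i)) :=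
  (LinearMap.pi fun i => (Algebra.trace K L).comp (LinearMap.mulRight K (t i))).isLinear

theorem injective_trace_mul_of_surjective [Field K] [Field L] [Algebra K L]
    [FiniteDimensional K L] [Algebra.IsSeparable K L] {t : ι → L} (ht : Function.Surjective t) :
    Function.Injective (fun (a : L) (i : ι) => Algebra.trace K L (a * t i)) := by
  intro a b hab
  rw [← sub_eq_zero]
  refine (traceForm_nondegenerate K L).1 (a - b) fun y => ?_
  obtain ⟨i, rfl⟩ := ht y
  rw [Algebra.traceForm_apply, sub_mul, map_sub]
  exact sub_eq_zero.mpr (congrFun hab i)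

end TraceCode

section SOWitness

variable {F : Type} [Field F]

/-- `diagonal ![t, t⁻¹, 1] * !![0,1,0; 1,0,0; 0,0,-1] * !![1, s², -s; 0,1,0; 0,s,1]`. -/
def soWitness (s t : F) : Matrix (Fin 3) (Fin 3) F :=
  !![0, t, 0; t⁻¹, s ^ 2 / t, -s / t; 0, -s, -1]

theorem soWitness_orthogonal (h3 : (3 : F) = 0) (s : F) {t : F} (ht : t ≠ 0) :
    (soWitness s t)ᵀ * matJ F * soWitness s t = matJ F := by
  ext i j
  fin_cases i <;> fin_cases j <;>
    simp [soWitness, matJ, mul_apply, Fin.sum_univ_three, ht]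
  · field_simp
    linear_combination s ^ 2 * h3
  · field_simp
    ring

theorem det_soWitness (s : F) {t : F} (ht : t ≠ 0) : (soWitness s t).det = 1 := by
  simp [soWitness, det_fin_three, ht]

theorem trace_soWitness (s t : F) : (soWitness s t).trace = s ^ 2 / t - 1 := by
  simp [soWitness, trace_fin_three, sub_eq_add_neg]

theorem exists_special_orthogonal_trace_eq (h3 : (3 : F) = 0) (x : F) :
    ∃ w : Matrix (Fin 3) (Fin 3) F,
      (w.det ≠ 0 ∧ wᵀ * matJ F * w = matJ F ∧ w.det = 1) ∧ w.trace = x := by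
  obtain ⟨s, t, ht, hst⟩ : ∃ s t : F, t ≠ 0 ∧ s ^ 2 / t - 1 = x := by
    by_cases hx : x + 1 = 0
    · exact ⟨0, 1, one_ne_zero, by linear_combination -hx⟩
    · exact ⟨x + 1, x + 1, hx, by field_simp; ring⟩
  refine ⟨soWitness s t, ⟨?_, soWitness_orthogonal h3 s ht, det_soWitness s ht⟩, ?_⟩
  · simp [det_soWitness s ht]
  · rw [trace_soWitness, hst]

end SOWitness

theorem dual_code_iso_general (F : Type) [Field F] [Fintype F]
    [Algebra (ZMod 3) F] :
    (IsLinearMap (ZMod 3)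
        (fun (a : F)
          (g : {w : Matrix (Fin 3) (Fin 3) F //
                  w.det ≠ 0 ∧ wᵀ * matJ F * w = matJ F ∧ w.det = 1}) =>
          Algebra.trace (ZMod 3) F (a * g.val.trace)) ∧
      Function.Injective
        (fun (a : F)
          (g : {w : Matrix (Fin 3) (Fin 3) F //
                  w.det ≠ 0 ∧ wᵀ * matJ F * w = matJ F ∧ w.det = 1}) =>
          Algebra.trace (ZMod 3) F (a * g.val.trace))) ∧
    (IsLinearMap (ZMod 3)
        (fun (a : F)
          (g : {w : Matrix (Fin 3) (Fin 3) F //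
                  w.det ≠ 0 ∧ wᵀ * matJ F * w = matJ F}) =>
          Algebra.trace (ZMod 3) F (a * g.val.trace)) ∧
      Function.Injective
        (fun (a : F)
          (g : {w : Matrix (Fin 3) (Fin 3) F //
                  w.det ≠ 0 ∧ wᵀ * matJ F * w = matJ F}) =>
          Algebra.trace (ZMod 3) F (a * g.val.trace))) := by
  have h3 : (3 : F) = 0 := by
    have := map_natCast (algebraMap (ZMod 3) F) 3
    rw [ZMod.natCast_self, map_zero] at this
    exact_mod_cast this.symm
  have hSO : Function.Surjective fun g : {w : Matrix (Fin 3) (Fin 3) F //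
      w.det ≠ 0 ∧ wᵀ * matJ F * w = matJ F ∧ w.det = 1} => g.val.trace := fun x =>
    let ⟨w, hw, hwx⟩ := exists_special_orthogonal_trace_eq h3 x
    ⟨⟨w, hw⟩, hwx⟩
  have hO : Function.Surjective fun g : {w : Matrix (Fin 3) (Fin 3) F //
      w.det ≠ 0 ∧ wᵀ * matJ F * w = matJ F} => g.val.trace := fun x =>
    let ⟨w, hw, hwx⟩ := exists_special_orthogonal_trace_eq h3 x
    ⟨⟨w, hw.1, hw.2.1⟩, hwx⟩
  exact ⟨⟨isLinearMap_trace_mul _, injective_trace_mul_of_surjective hSO⟩,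
    ⟨isLinearMap_trace_mul _, injective_trace_mul_of_surjective hO⟩⟩

/-- For G = SO(3,q) and G = O(3,q), the map sending a ∈ F_q to the tuple
`(tr(a·Tr g))_{g ∈ G} ∈ F_3^G` is an injective F_3-linear map, where q = 3^r and
tr : F_q → F_3 is the absolute trace. -/
theorem dual_code_iso (r : ℕ) (hr : 0 < r) (F : Type) [Field F] [Fintype F]
    [DecidableEq F] [Algebra (ZMod 3) F] (hF : Fintype.card F = 3 ^ r) :
    (IsLinearMap (ZMod 3)
        (fun (a : F)
          (g : {w : Matrix (Fin 3) (Fin 3) F //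
                  w.det ≠ 0 ∧ wᵀ * matJ F * w = matJ F ∧ w.det = 1}) =>
          Algebra.trace (ZMod 3) F (a * g.val.trace)) ∧
      Function.Injective
        (fun (a : F)
          (g : {w : Matrix (Fin 3) (Fin 3) F //
                  w.det ≠ 0 ∧ wᵀ * matJ F * w = matJ F ∧ w.det = 1}) =>
          Algebra.trace (ZMod 3) F (a * g.val.trace))) ∧
    (IsLinearMap (ZMod 3)
        (fun (a : F)
          (g : {w : Matrix (Fin 3) (Fin 3) F //
                  w.det ≠ 0 ∧ wᵀ * matJ F * w = matJ F}) =>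
          Algebra.trace (ZMod 3) F (a * g.val.trace)) ∧
      Function.Injective
        (fun (a : F)
          (g : {w : Matrix (Fin 3) (Fin 3) F //
                  w.det ≠ 0 ∧ wᵀ * matJ F * w = matJ F}) =>
          Algebra.trace (ZMod 3) F (a * g.val.trace))) :=
  dual_code_iso_general F
end

section
/- Let a ∈ F_q^*. Then the Hamming weight of the codeword c₁(a) = (tr(a·Tr g))_{g∈SO(3,q)}, i.e. the number of g ∈ SO(3,q) with tr(a·Tr g) ≠ 0, equals (2q/3)·(q² - 1 - Re(λ(a))·K(λ;a²)). -/
open Finset Matrix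

/-!
Since `[tr x ≠ 0] = (2 - λ(x) - λ(-x)) / 3`, the weight equals `(2 |SO(3,q)| - S(a) - S(-a)) / 3`
with `S(b) = ∑_{g ∈ SO(3,q)} λ(b · Tr g)`. By the Bruhat decomposition, every `g ∈ SO(3,q)` is
uniquely either a Borel element, of trace `α + α⁻¹ + 1`, or a big-cell element, of trace
`α (f + h/α)² - 1` (in characteristic 3). The Borel elements contribute `q λ(b) K(λ; b²)` to `S(b)`;
the big cell contributes nothing, because after the shift `f ↦ f - h/α` the sum over `α ≠ 0` of
`λ(b f² α)` is `q - 1` for `f = 0` and `-1` otherwise. Counting the two cells gives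
`|SO(3,q)| = q (q² - 1)`, and `λ(a) + λ(-a) = 2 Re λ(a)`.
-/

section Character

variable {F : Type} [Field F] [Fintype F] [Algebra (ZMod 3) F]

lemma ZMod.stdAddChar_one_ne_one {N : ℕ} [NeZero N] [Nontrivial (ZMod N)] :
    ZMod.stdAddChar (1 : ZMod N) ≠ 1 := by
  rw [← (ZMod.stdAddChar (N := N)).map_zero_eq_one]
  exact ZMod.injective_stdAddChar.ne one_ne_zero

lemma ZMod.ite_eq_zero_eq_stdAddChar (c : ZMod 3) :
    (if c = 0 then 0 else 1 : ℂ) = (2 - ZMod.stdAddChar c - ZMod.stdAddChar (-c)) / 3 := by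
  have hsum : ∑ c : ZMod 3, ZMod.stdAddChar c = 0 := AddChar.sum_eq_zero_of_ne_one
    (AddChar.ne_one_iff.mpr ⟨(1 : ZMod 3), ZMod.stdAddChar_one_ne_one⟩)
  have h3 : 1 + ZMod.stdAddChar (1 : ZMod 3) + ZMod.stdAddChar (2 : ZMod 3) = 0 := by
    rw [← hsum, ← (ZMod.stdAddChar (N := 3)).map_zero_eq_one]
    exact (Fin.sum_univ_three _).symm
  obtain rfl | rfl | rfl : c = 0 ∨ c = 1 ∨ c = 2 := by decide +revert
  · norm_num
  · rw [if_neg (by decide), show (-1 : ZMod 3) = 2 from rfl]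
    linear_combination h3 / 3
  · rw [if_neg (by decide), show (-2 : ZMod 3) = 1 from rfl]
    linear_combination h3 / 3

variable (F) in
noncomputable def traceChar : AddChar F ℂ :=
  ZMod.stdAddChar.compAddMonoidHom (Algebra.trace (ZMod 3) F).toAddMonoidHom

omit [Fintype F] in
lemma traceChar_apply (x : F) :
    traceChar F x = ZMod.stdAddChar (Algebra.trace (ZMod 3) F x) := rfl

lemma canChar_eq_traceChar (x : F) : canChar F x = traceChar F x := by
  rw [canChar, traceChar_apply, ZMod.stdAddChar_apply, ZMod.toCircle_apply]
  push_cast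
  ring_nf

variable (F) in
lemma traceChar_ne_one : traceChar F ≠ 1 := by
  obtain ⟨x, hx⟩ := Algebra.trace_surjective (ZMod 3) F 1
  refine AddChar.ne_one_iff.mpr ⟨x, ?_⟩
  rw [traceChar_apply, hx]
  exact ZMod.stdAddChar_one_ne_one

omit [Fintype F] in
lemma ite_trace_eq_zero (x : F) :
    (if Algebra.trace (ZMod 3) F x = 0 then 0 else 1 : ℂ)
      = (2 - traceChar F x - traceChar F (-x)) / 3 := by
  rw [traceChar_apply, traceChar_apply, map_neg]
  exact ZMod.ite_eq_zero_eq_stdAddChar _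

variable [DecidableEq F]

lemma sum_traceChar_mul (b : F) :
    ∑ x : F, traceChar F (b * x) = if b = 0 then (Fintype.card F : ℂ) else 0 := by
  simp_rw [mul_comm b]
  exact_mod_cast AddChar.sum_mulShift b (AddChar.IsPrimitive.of_ne_one (traceChar_ne_one F))

lemma sum_ne_zero_traceChar_mul (b : F) :
    ∑ α ∈ univ.filter (fun α : F => α ≠ 0), traceChar F (b * α)
      = (if b = 0 then (Fintype.card F : ℂ) else 0) - 1 := by
  rw [filter_ne', sum_erase_eq_sub (mem_univ 0), sum_traceChar_mul, mul_zero,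
    AddChar.map_zero_eq_one]

lemma kloos_sq_eq_sum {b : F} (hb : b ≠ 0) :
    kloos F (b ^ 2) = ∑ α ∈ univ.filter (fun α : F => α ≠ 0), traceChar F (b * α + b * α⁻¹) := by
  refine sum_nbij' (b⁻¹ * ·) (b * ·) ?_ ?_ ?_ ?_ ?_ <;>
    simp only [mem_filter, mem_univ, true_and]
  · exact fun α hα => mul_ne_zero (inv_ne_zero hb) hα
  · exact fun α hα => mul_ne_zero hb hα
  · intro α _; field_simp
  · intro α _; field_simp
  · intro α _
    rw [canChar_eq_traceChar]
    congr 1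
    field_simp

end Character

section Bruhat

variable {F : Type} [Field F]

def IsOrthoJ (w : Matrix (Fin 3) (Fin 3) F) : Prop := wᵀ * matJ F * w = matJ F

lemma IsOrthoJ.apply {w : Matrix (Fin 3) (Fin 3) F} (hw : IsOrthoJ w) (i j : Fin 3) :
    w 0 i * w 1 j + w 1 i * w 0 j + w 2 i * w 2 j = matJ F i j := by
  rw [← hw]
  simp only [matJ, Matrix.mul_apply, transpose_apply, Fin.sum_univ_three, of_apply, cons_val',
    cons_val_fin_one, cons_val_zero, cons_val_one, Matrix.cons_val, mul_zero, mul_one, zero_add,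
    add_zero]
  ring

def borelElt (α f : F) : Matrix (Fin 3) (Fin 3) F :=
  !![α, f ^ 2 * α, -(α * f); 0, α⁻¹, 0; 0, f, 1]

/-- `borelElt α f * !![0,1,0; 1,0,0; 0,0,-1] * borelElt 1 h`, multiplied out in characteristic 3. -/
def bigCellElt (α f h : F) : Matrix (Fin 3) (Fin 3) F :=
  !![f ^ 2 * α, α * (1 + f ^ 2 * h ^ 2 + f * h), α * f * (1 - f * h);
     α⁻¹, α⁻¹ * h ^ 2, -(α⁻¹ * h);
     f, f * h ^ 2 - h, -(f * h) - 1]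

lemma trace_borelElt (α f : F) : (borelElt α f).trace = α + α⁻¹ + 1 := by
  simp [borelElt, Matrix.trace_fin_three]

lemma det_borelElt {α : F} (hα : α ≠ 0) (f : F) : (borelElt α f).det = 1 := by
  simp [borelElt, Matrix.det_fin_three, hα]

variable [CharP F 3]

lemma isOrthoJ_borelElt {α : F} (hα : α ≠ 0) (f : F) : IsOrthoJ (borelElt α f) := by
  ext i j
  fin_cases i <;> fin_cases j <;>
    simp only [borelElt, matJ, Matrix.mul_apply, transpose_apply, Fin.sum_univ_three,
      Fin.zero_eta, Fin.mk_one, Fin.reduceFinMk, Fin.isValue, of_apply, cons_val', cons_val_zero,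
      cons_val_one, cons_val_fin_one, Matrix.cons_val] <;> grind

lemma isOrthoJ_bigCellElt {α : F} (hα : α ≠ 0) (f h : F) : IsOrthoJ (bigCellElt α f h) := by
  ext i j
  fin_cases i <;> fin_cases j <;>
    simp only [bigCellElt, matJ, Matrix.mul_apply, transpose_apply, Fin.sum_univ_three,
      Fin.zero_eta, Fin.mk_one, Fin.reduceFinMk, Fin.isValue, of_apply, cons_val', cons_val_zero,
      cons_val_one, cons_val_fin_one, Matrix.cons_val] <;> grind

lemma det_bigCellElt {α : F} (hα : α ≠ 0) (f h : F) : (bigCellElt α f h).det = 1 := by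
  simp only [bigCellElt, det_fin_three, of_apply, cons_val', cons_val_zero, cons_val_one,
    cons_val_fin_one, Matrix.cons_val]
  grind

lemma trace_bigCellElt {α : F} (hα : α ≠ 0) (f h : F) :
    (bigCellElt α f h).trace = α * (f + h * α⁻¹) ^ 2 - 1 := by
  simp only [bigCellElt, trace_fin_three, of_apply, cons_val', cons_val_zero, cons_val_one,
    cons_val_fin_one, Matrix.cons_val]
  grind

lemma eq_borelElt {w : Matrix (Fin 3) (Fin 3) F} (hw : IsOrthoJ w) (hd : w.det = 1)
    (hz : w 1 0 = 0) : w 0 0 ≠ 0 ∧ w = borelElt (w 0 0) (w 2 1) := by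
  have := hw.apply
  simp only [matJ, Fin.forall_fin_succ, Fin.isValue, of_apply, cons_val', cons_val_fin_one,
    cons_val_zero, cons_val_succ, Fin.succ_zero_eq_one, Fin.succ_one_eq_two, IsEmpty.forall_iff,
    and_true] at this
  rw [Matrix.det_fin_three] at hd
  refine ⟨by grind, ?_⟩
  ext i j
  fin_cases i <;> fin_cases j <;>
    simp only [borelElt, Fin.zero_eta, Fin.mk_one, Fin.reduceFinMk, Fin.isValue, of_apply,
      cons_val', cons_val_zero, cons_val_one, cons_val_fin_one, Matrix.cons_val] <;> grind

lemma eq_bigCellElt {w : Matrix (Fin 3) (Fin 3) F} (hw : IsOrthoJ w) (hd : w.det = 1)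
    (hz : w 1 0 ≠ 0) : w = bigCellElt (w 1 0)⁻¹ (w 2 0) (-(w 1 2 / w 1 0)) := by
  have := hw.apply
  simp only [matJ, Fin.forall_fin_succ, Fin.isValue, of_apply, cons_val', cons_val_fin_one,
    cons_val_zero, cons_val_succ, Fin.succ_zero_eq_one, Fin.succ_one_eq_two, IsEmpty.forall_iff,
    and_true] at this
  rw [Matrix.det_fin_three] at hd
  ext i j
  fin_cases i <;> fin_cases j <;>
    simp only [bigCellElt, Fin.zero_eta, Fin.mk_one, Fin.reduceFinMk, Fin.isValue, of_apply,
      cons_val', cons_val_zero, cons_val_one, cons_val_fin_one, Matrix.cons_val] <;> grind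

end Bruhat

section SO3

variable (F : Type) [Field F] [Fintype F] [DecidableEq F]

def SO3 : Finset (Matrix (Fin 3) (Fin 3) F) :=
  univ.filter fun w => w.det ≠ 0 ∧ wᵀ * matJ F * w = matJ F ∧ w.det = 1

variable {F}

lemma mem_SO3 {w : Matrix (Fin 3) (Fin 3) F} : w ∈ SO3 F ↔ IsOrthoJ w ∧ w.det = 1 := by
  simp only [SO3, IsOrthoJ, mem_filter, mem_univ, true_and]
  exact ⟨fun h => h.2, fun h => ⟨h.2 ▸ one_ne_zero, h⟩⟩

variable [CharP F 3] {M : Type*} [AddCommMonoid M]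

lemma sum_SO3_filter_borel (φ : Matrix (Fin 3) (Fin 3) F → M) :
    ∑ w ∈ (SO3 F).filter (fun w => w 1 0 = 0), φ w
      = ∑ p ∈ (univ.filter fun α : F => α ≠ 0) ×ˢ univ, φ (borelElt p.1 p.2) := by
  refine sum_nbij' (fun w => (w 0 0, w 2 1)) (fun p => borelElt p.1 p.2) ?_ ?_ ?_ ?_ ?_ <;>
    simp only [mem_filter, mem_product, mem_univ, and_true, true_and, mem_SO3]
  · exact fun w ⟨⟨hw, hd⟩, hz⟩ => (eq_borelElt hw hd hz).1
  · exact fun p hp => ⟨⟨isOrthoJ_borelElt hp _, det_borelElt hp _⟩, by simp [borelElt]⟩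
  · exact fun w ⟨⟨hw, hd⟩, hz⟩ => (eq_borelElt hw hd hz).2.symm
  · intro p _; simp [borelElt]
  · exact fun w ⟨⟨hw, hd⟩, hz⟩ => congrArg φ (eq_borelElt hw hd hz).2

lemma sum_SO3_filter_bigCell (φ : Matrix (Fin 3) (Fin 3) F → M) :
    ∑ w ∈ (SO3 F).filter (fun w => ¬ w 1 0 = 0), φ w
      = ∑ p ∈ (univ.filter fun α : F => α ≠ 0) ×ˢ (univ ×ˢ univ),
          φ (bigCellElt p.1 p.2.1 p.2.2) := by
  refine sum_nbij' (fun w => ((w 1 0)⁻¹, w 2 0, -(w 1 2 / w 1 0)))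
    (fun p => bigCellElt p.1 p.2.1 p.2.2) ?_ ?_ ?_ ?_ ?_ <;>
    simp only [mem_filter, mem_product, mem_univ, and_true, true_and, mem_SO3]
  · exact fun w ⟨_, hz⟩ => inv_ne_zero hz
  · exact fun p hp =>
      ⟨⟨isOrthoJ_bigCellElt hp _ _, det_bigCellElt hp _ _⟩, by simp [bigCellElt, hp]⟩
  · exact fun w ⟨⟨hw, hd⟩, hz⟩ => (eq_bigCellElt hw hd hz).symm
  · rintro ⟨α, f, h⟩ hα
    simp only [bigCellElt, of_apply, cons_val', cons_val_zero, cons_val_fin_one, cons_val_one,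
      Matrix.cons_val, inv_inv, div_inv_eq_mul, neg_mul, neg_neg, Prod.mk.injEq, true_and]
    field_simp
  · exact fun w ⟨⟨hw, hd⟩, hz⟩ => congrArg φ (eq_bigCellElt hw hd hz)

lemma sum_SO3 (φ : Matrix (Fin 3) (Fin 3) F → M) :
    ∑ w ∈ SO3 F, φ w
      = ∑ α ∈ univ.filter (fun α : F => α ≠ 0), ∑ f, φ (borelElt α f)
        + ∑ α ∈ univ.filter (fun α : F => α ≠ 0), ∑ f, ∑ h, φ (bigCellElt α f h) := by
  rw [← sum_filter_add_sum_filter_not _ (fun w => w 1 0 = 0), sum_SO3_filter_borel,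
    sum_SO3_filter_bigCell, sum_product, sum_product]
  simp_rw [sum_product]

omit [CharP F 3] in
lemma natCast_card_filter_ne_zero :
    ((univ.filter fun α : F => α ≠ 0).card : ℂ) = Fintype.card F - 1 := by
  rw [filter_ne', card_erase_of_mem (mem_univ 0), card_univ, Nat.cast_sub Fintype.card_pos,
    Nat.cast_one]

lemma natCast_card_SO3 :
    ((SO3 F).card : ℂ) = Fintype.card F * ((Fintype.card F : ℂ) ^ 2 - 1) := by
  rw [card_eq_sum_ones, Nat.cast_sum, sum_SO3]
  simp only [natCast_card_filter_ne_zero, Nat.cast_one, sum_const, card_univ, nsmul_eq_mul, mul_one]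
  ring

end SO3

section CharacterSum

variable {F : Type} [Field F] [Fintype F] [DecidableEq F] [Algebra (ZMod 3) F]

lemma sum_borelElt_traceChar (b : F) :
    ∑ α ∈ univ.filter (fun α : F => α ≠ 0), ∑ f, traceChar F (b * (borelElt α f).trace)
      = Fintype.card F * traceChar F b
          * ∑ α ∈ univ.filter (fun α : F => α ≠ 0), traceChar F (b * α + b * α⁻¹) := by
  simp_rw [trace_borelElt, mul_add b _ 1, mul_one, mul_add b, AddChar.map_add_eq_mul, sum_const,
    card_univ, nsmul_eq_mul, mul_sum]
  refine sum_congr rfl fun α _ => by ring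

lemma natCast_card_SO3_filter_trace_ne_zero (b : F) :
    (((SO3 F).filter fun w => Algebra.trace (ZMod 3) F (b * w.trace) ≠ 0).card : ℂ)
      = (2 * (SO3 F).card - ∑ w ∈ SO3 F, traceChar F (b * w.trace)
          - ∑ w ∈ SO3 F, traceChar F (-b * w.trace)) / 3 := by
  simp_rw [natCast_card_filter, ite_not, ite_trace_eq_zero, neg_mul, ← sum_div, sum_sub_distrib,
    sum_const, nsmul_eq_mul]
  ring

variable [CharP F 3]

lemma sum_bigCellElt_traceChar {b : F} (hb : b ≠ 0) :
    ∑ α ∈ univ.filter (fun α : F => α ≠ 0), ∑ f, ∑ h,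
      traceChar F (b * (bigCellElt α f h).trace) = 0 := by
  calc _ = ∑ α ∈ univ.filter (fun α : F => α ≠ 0), ∑ h : F, ∑ f : F,
        traceChar F (b * f ^ 2 * α) * traceChar F (-b) := by
        refine sum_congr rfl fun α hα => ?_
        rw [sum_comm]
        refine sum_congr rfl fun h _ => ?_
        rw [← (Equiv.subRight (h * α⁻¹)).sum_comp]
        refine sum_congr rfl fun f _ => ?_
        rw [Equiv.subRight_apply, trace_bigCellElt (mem_filter.mp hα).2, sub_add_cancel,
          ← AddChar.map_add_eq_mul]
        ring_nf
    _ = Fintype.card F * traceChar F (-b) * ∑ α ∈ univ.filter (fun α : F => α ≠ 0),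
          ∑ f : F, traceChar F (b * f ^ 2 * α) := by
        simp_rw [sum_const, card_univ, nsmul_eq_mul, ← sum_mul, ← mul_sum]
        rw [← sum_mul]
        ring
    _ = 0 := by
        rw [sum_comm]
        simp_rw [sum_ne_zero_traceChar_mul, sum_sub_distrib]
        simp [hb]

lemma sum_SO3_traceChar {b : F} (hb : b ≠ 0) :
    ∑ w ∈ SO3 F, traceChar F (b * w.trace) = Fintype.card F * traceChar F b * kloos F (b ^ 2) := by
  rw [sum_SO3, sum_borelElt_traceChar, sum_bigCellElt_traceChar hb, add_zero, kloos_sq_eq_sum hb]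

end CharacterSum

theorem weight_SO3_codeword_general (r : ℕ) (F : Type) [Field F] [Fintype F]
    [DecidableEq F] [Algebra (ZMod 3) F] (hF : Fintype.card F = 3 ^ r)
    (a : F) (ha : a ≠ 0) :
    ((Finset.univ.filter
        (fun w : Matrix (Fin 3) (Fin 3) F =>
          (w.det ≠ 0 ∧ wᵀ * matJ F * w = matJ F ∧ w.det = 1) ∧
            Algebra.trace (ZMod 3) F (a * w.trace) ≠ 0)).card : ℂ)
      = (2 * (3 ^ r : ℂ) / 3) *
          ((3 ^ r : ℂ) ^ 2 - 1 - ((canChar F a).re : ℂ) * kloos F (a ^ 2)) := by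
  have : CharP F 3 := (Algebra.charP_iff (ZMod 3) F 3).mp inferInstance
  have hq : (Fintype.card F : ℂ) = 3 ^ r := by exact_mod_cast hF
  have hre : traceChar F a + traceChar F (-a) = 2 * ((canChar F a).re : ℂ) := by
    rw [AddChar.map_neg_eq_conj, Complex.add_conj, canChar_eq_traceChar]
    push_cast
    ring
  rw [← filter_filter, ← SO3, natCast_card_SO3_filter_trace_ne_zero, natCast_card_SO3,
    sum_SO3_traceChar ha, sum_SO3_traceChar (neg_ne_zero.mpr ha), neg_sq, hq]
  linear_combination (-(3 : ℂ) ^ r / 3 * kloos F (a ^ 2)) * hre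

/-- The Hamming weight of the codeword `c₁(a) = (tr(a·Tr g))_{g ∈ SO(3,q)}` equals
`(2q/3)·(q² - 1 - Re(λ(a))·K(λ;a²))`, where q = 3^r. -/
theorem weight_SO3_codeword (r : ℕ) (hr : 0 < r) (F : Type) [Field F] [Fintype F]
    [DecidableEq F] [Algebra (ZMod 3) F] (hF : Fintype.card F = 3 ^ r)
    (a : F) (ha : a ≠ 0) :
    ((Finset.univ.filter
        (fun w : Matrix (Fin 3) (Fin 3) F =>
          (w.det ≠ 0 ∧ wᵀ * matJ F * w = matJ F ∧ w.det = 1) ∧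
            Algebra.trace (ZMod 3) F (a * w.trace) ≠ 0)).card : ℂ)
      = (2 * (3 ^ r : ℂ) / 3) *
          ((3 ^ r : ℂ) ^ 2 - 1 - ((canChar F a).re : ℂ) * kloos F (a ^ 2)) :=
  weight_SO3_codeword_general r F hF a ha
end

section
/- The first moment of Kloosterman sums with trace zero square arguments satisfies T₀SK = ∑_{a∈F_q^*, tr(a)=0} K(λ;a²) = (1/3)·(-1)^r·q + 1. -/
/-!
Let `ψ = exp (2πi tr(·)/3)`, `χ` the quadratic character and `G` their Gauss sum. Averaging
`ψ (c a)` over `c ∈ 𝔽₃` detects `tr a = 0`, so for fixed `α ≠ 0` the sum of `ψ (a² / α)` over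
the trace-zero `a` becomes a third of three complete quadratic sums; completing the square
(in characteristic 3, where `4 = 1`) evaluates them as `χ(α) G ψ(-c² α)`. Summing over `α`, the
term `χ(α) ψ(α)` produces `G² / 3 = χ(-1) q / 3 = (-1)^r q / 3`, while the remaining character
sums contribute `0` and `1`.
-/

open Finset

lemma sum_filter_ne_zero_eq_sub {ι M : Type*} [Fintype ι] [DecidableEq ι] [Zero ι]
    [AddCommGroup M] (f : ι → M) :
    ∑ x ∈ univ.filter (fun x => x ≠ 0), f x = ∑ x, f x - f 0 := by
  rw [filter_ne' univ 0, sum_erase_eq_sub (mem_univ 0)]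

section QuadraticGaussSum

variable {F : Type*} [Field F] [Fintype F] [DecidableEq F]

variable (F) in
noncomputable def complexQuadraticChar : MulChar F ℂ :=
  (quadraticChar F).ringHomComp (Int.castRingHom ℂ)

lemma complexQuadraticChar_apply (x : F) :
    complexQuadraticChar F x = (quadraticChar F x : ℂ) := rfl

lemma isQuadratic_complexQuadraticChar : (complexQuadraticChar F).IsQuadratic :=
  (quadraticChar_isQuadratic F).comp (Int.castRingHom ℂ)

lemma sum_sq_eq_sum_complexQuadraticChar_add_one (hF : ringChar F ≠ 2) (f : F → ℂ) :
    ∑ b : F, f (b ^ 2) = ∑ x : F, (complexQuadraticChar F x + 1) * f x := by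
  rw [← sum_fiberwise_of_maps_to (g := fun b : F => b ^ 2) (fun b _ => mem_univ (b ^ 2))]
  refine sum_congr rfl fun x _ => ?_
  have hcard : ((univ.filter (fun b : F => b ^ 2 = x)).card : ℂ)
      = complexQuadraticChar F x + 1 := by
    have := quadraticChar_card_sqrts hF x
    rw [Set.toFinset_ofPred] at this
    rw [complexQuadraticChar_apply]
    exact_mod_cast this
  rw [sum_congr rfl fun b hb => congrArg f (mem_filter.mp hb).2, sum_const, nsmul_eq_mul, hcard]

lemma sum_addChar_mul_sq (hF : ringChar F ≠ 2) {ψ : AddChar F ℂ} (hψ : ψ.IsPrimitive) {u : F}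
    (hu : u ≠ 0) :
    ∑ b : F, ψ (u * b ^ 2) = complexQuadraticChar F u * gaussSum (complexQuadraticChar F) ψ := by
  have hshift : gaussSum (complexQuadraticChar F) (ψ.mulShift u)
      = complexQuadraticChar F u * gaussSum (complexQuadraticChar F) ψ := by
    simpa [isQuadratic_complexQuadraticChar.inv] using
      gaussSum_mulShift_eq (complexQuadraticChar F) ψ (Units.mk0 u hu)
  rw [sum_sq_eq_sum_complexQuadraticChar_add_one hF (fun x => ψ (u * x)), ← hshift]
  simp only [add_mul, one_mul, sum_add_distrib, gaussSum, ← AddChar.mulShift_apply]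
  rw [AddChar.sum_eq_zero_of_ne_one (hψ hu), add_zero]

lemma sum_addChar_quadratic (hF : ringChar F ≠ 2) {ψ : AddChar F ℂ} (hψ : ψ.IsPrimitive) {u : F}
    (hu : u ≠ 0) (v : F) :
    ∑ a : F, ψ (u * a ^ 2 + v * a)
      = ψ (-(v ^ 2 / (4 * u))) * (complexQuadraticChar F u *
          gaussSum (complexQuadraticChar F) ψ) := by
  have h2 : (2 : F) ≠ 0 := Ring.two_ne_zero hF
  have h4 : (4 : F) ≠ 0 := by simpa [show (4 : F) = 2 ^ 2 by norm_num] using h2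
  rw [← sum_addChar_mul_sq hF hψ hu, mul_sum]
  refine Fintype.sum_equiv (Equiv.addRight (v / (2 * u))) _ _ fun b => ?_
  rw [← AddChar.map_add_eq_mul, Equiv.coe_addRight]
  congr 1
  field_simp
  ring

lemma complexQuadraticChar_ne_one (hF : ringChar F ≠ 2) : complexQuadraticChar F ≠ 1 :=
  (MulChar.ringHomComp_ne_one_iff Int.cast_injective).mpr (quadraticChar_ne_one hF)

lemma complexQuadraticChar_inv (a : F) :
    complexQuadraticChar F a⁻¹ = complexQuadraticChar F a := by
  rw [← MulChar.inv_apply', isQuadratic_complexQuadraticChar.inv]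

end QuadraticGaussSum

section TraceCharacter

variable (p : ℕ) [Fact p.Prime] (F : Type*) [Field F] [Algebra (ZMod p) F]

noncomputable def traceAddChar : AddChar F ℂ :=
  ZMod.stdAddChar.compAddMonoidHom (Algebra.trace (ZMod p) F).toAddMonoidHom

variable {p F}

lemma traceAddChar_apply (x : F) :
    traceAddChar p F x = ZMod.stdAddChar (Algebra.trace (ZMod p) F x) := rfl

lemma traceAddChar_algebraMap_mul (c : ZMod p) (a : F) :
    traceAddChar p F (algebraMap (ZMod p) F c * a)
      = ZMod.stdAddChar (c * Algebra.trace (ZMod p) F a) := by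
  rw [traceAddChar_apply, ← Algebra.smul_def, map_smul, smul_eq_mul]

lemma traceAddChar_ne_one [Finite F] : traceAddChar p F ≠ 1 := by
  refine fun h => Algebra.trace_ne_zero (ZMod p) F (LinearMap.ext fun x => ?_)
  have hx : ZMod.stdAddChar (Algebra.trace (ZMod p) F x) = ZMod.stdAddChar (0 : ZMod p) := by
    rw [← traceAddChar_apply, h, AddChar.one_apply, AddChar.map_zero_eq_one]
  exact ZMod.injective_stdAddChar hx

lemma isPrimitive_traceAddChar [Finite F] : (traceAddChar p F).IsPrimitive :=
  AddChar.IsPrimitive.of_ne_one traceAddChar_ne_one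

lemma natCast_mul_sum_trace_eq_zero [Fintype F] (f : F → ℂ) :
    (p : ℂ) * ∑ a ∈ univ.filter (fun a => Algebra.trace (ZMod p) F a = 0), f a
      = ∑ c : ZMod p, ∑ a : F, traceAddChar p F (algebraMap (ZMod p) F c * a) * f a := by
  rw [sum_comm, mul_sum, sum_filter]
  refine sum_congr rfl fun a _ => ?_
  rw [← sum_mul]
  simp only [traceAddChar_algebraMap_mul]
  rw [AddChar.sum_mulShift _ (ZMod.isPrimitive_stdAddChar p), ZMod.card]
  split_ifs <;> simp

end TraceCharacter

section CharThree

variable {F : Type} [Field F] [Fintype F] [Algebra (ZMod 3) F]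

lemma canChar_eq_traceAddChar : canChar F = traceAddChar 3 F := by
  ext x
  rw [traceAddChar_apply, ZMod.stdAddChar_apply, ZMod.toCircle_apply, canChar]
  norm_num

lemma charP_three : CharP F 3 := charP_of_injective_algebraMap' (ZMod 3) 3

lemma ringChar_ne_two : ringChar F ≠ 2 := by
  have := charP_three (F := F)
  rw [ringChar.eq F 3]
  norm_num

lemma three_mul_sum_trace_eq_zero [DecidableEq F] {α : F} (hα : α ≠ 0) :
    3 * ∑ a ∈ univ.filter (fun a => Algebra.trace (ZMod 3) F a = 0),
        traceAddChar 3 F (a ^ 2 * α⁻¹)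
      = complexQuadraticChar F α * gaussSum (complexQuadraticChar F) (traceAddChar 3 F) *
          (1 + 2 * traceAddChar 3 F (-α)) := by
  have := charP_three (F := F)
  have h4 : (4 : F) = 1 := by linear_combination (CharP.cast_eq_zero F 3 : (3 : F) = 0)
  have hsum := natCast_mul_sum_trace_eq_zero (p := 3) (fun a => traceAddChar 3 F (a ^ 2 * α⁻¹))
  push_cast at hsum
  rw [hsum]
  simp_rw [← AddChar.map_add_eq_mul, add_comm _ (_ ^ 2 * _), mul_comm (_ ^ 2) α⁻¹,
    sum_addChar_quadratic ringChar_ne_two isPrimitive_traceAddChar (inv_ne_zero hα),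
    complexQuadraticChar_inv]
  have huniv : (univ : Finset (ZMod 3)) = {0, 1, 2} := by decide
  have hsq : ∀ c : ZMod 3, c ≠ 0 → -((algebraMap (ZMod 3) F c) ^ 2 / (4 * α⁻¹)) = -α := by
    intro c hc
    have hc2 : c ^ 2 = 1 := by revert c; decide
    rw [← map_pow, hc2, map_one, h4, one_mul, one_div, inv_inv]
  rw [huniv, sum_insert (by decide), sum_insert (by decide), sum_singleton,
    hsq 1 (by decide), hsq 2 (by decide), map_zero]
  simp only [ne_eq, OfNat.ofNat_ne_zero, not_false_eq_true, zero_pow, zero_div, neg_zero,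
    AddChar.map_zero_eq_one]
  ring

lemma sum_trace_eq_zero_addChar_add_sq_mul_inv [DecidableEq F] {α : F} (hα : α ≠ 0) :
    ∑ a ∈ univ.filter (fun a => a ≠ 0 ∧ Algebra.trace (ZMod 3) F a = 0),
        traceAddChar 3 F (α + a ^ 2 * α⁻¹)
      = gaussSum (complexQuadraticChar F) (traceAddChar 3 F) / 3 *
            (complexQuadraticChar F α * traceAddChar 3 F α) +
          2 * gaussSum (complexQuadraticChar F) (traceAddChar 3 F) / 3 * complexQuadraticChar F α -
        traceAddChar 3 F α := by
  have hfilter : univ.filter (fun a : F => a ≠ 0 ∧ Algebra.trace (ZMod 3) F a = 0)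
      = (univ.filter (fun a => Algebra.trace (ZMod 3) F a = 0)).erase 0 := by
    ext a
    simp
  have hinv : traceAddChar 3 F α * traceAddChar 3 F (-α) = 1 := by
    rw [← AddChar.map_add_eq_mul, add_neg_cancel, AddChar.map_zero_eq_one]
  rw [hfilter, sum_erase_eq_sub (by simp)]
  simp_rw [AddChar.map_add_eq_mul, ← mul_sum]
  simp only [ne_eq, OfNat.ofNat_ne_zero, not_false_eq_true, zero_pow, zero_mul,
    AddChar.map_zero_eq_one, mul_one]
  linear_combination (traceAddChar 3 F α / 3) * three_mul_sum_trace_eq_zero hα +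
    2 * gaussSum (complexQuadraticChar F) (traceAddChar 3 F) / 3 * complexQuadraticChar F α * hinv

lemma gaussSum_sq_of_card_eq_three_pow [DecidableEq F] {r : ℕ} (hF : Fintype.card F = 3 ^ r) :
    gaussSum (complexQuadraticChar F) (traceAddChar 3 F) ^ 2 = (-1) ^ r * 3 ^ r := by
  rw [gaussSum_sq (complexQuadraticChar_ne_one ringChar_ne_two) isQuadratic_complexQuadraticChar
    isPrimitive_traceAddChar, complexQuadraticChar_apply, quadraticChar_neg_one ringChar_ne_two,
    hF, Nat.cast_pow, show ((3 : ℕ) : ZMod 4) = -1 by decide, map_pow,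
    show ZMod.χ₄ (-1) = -1 by decide]
  push_cast
  rfl

end CharThree

theorem first_moment_trace_zero_square_args_general (r : ℕ) (F : Type) [Field F]
    [Fintype F] [DecidableEq F] [Algebra (ZMod 3) F] (hF : Fintype.card F = 3 ^ r) :
    ∑ a ∈ Finset.univ.filter
        (fun a : F => a ≠ 0 ∧ Algebra.trace (ZMod 3) F a = 0),
      kloos F (a ^ 2)
      = (1 / 3 : ℂ) * (-1 : ℂ) ^ r * (3 ^ r : ℂ) + 1 := by
  have hχ : ∑ α : F, complexQuadraticChar F α = 0 :=
    MulChar.sum_eq_zero_of_ne_one (complexQuadraticChar_ne_one ringChar_ne_two)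
  have hψ : ∑ α : F, traceAddChar 3 F α = 0 :=
    AddChar.sum_eq_zero_of_ne_one traceAddChar_ne_one
  have hG : ∑ α : F, complexQuadraticChar F α * traceAddChar 3 F α
      = gaussSum (complexQuadraticChar F) (traceAddChar 3 F) := rfl
  simp only [kloos, canChar_eq_traceAddChar]
  rw [sum_comm, sum_congr rfl fun α hα => sum_trace_eq_zero_addChar_add_sq_mul_inv
      (mem_filter.mp hα).2, sum_sub_distrib, sum_add_distrib, ← mul_sum, ← mul_sum,
    sum_filter_ne_zero_eq_sub, sum_filter_ne_zero_eq_sub, sum_filter_ne_zero_eq_sub, hG, hχ, hψ,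
    MulChar.map_zero, AddChar.map_zero_eq_one]
  linear_combination (1 / 3 : ℂ) * gaussSum_sq_of_card_eq_three_pow hF

/-- `T₀SK = ∑_{a ∈ F_q^*, tr a = 0} K(λ;a²) = (1/3)·(-1)^r·q + 1`, where q = 3^r. -/
theorem first_moment_trace_zero_square_args (r : ℕ) (hr : 0 < r) (F : Type) [Field F]
    [Fintype F] [DecidableEq F] [Algebra (ZMod 3) F] (hF : Fintype.card F = 3 ^ r) :
    ∑ a ∈ Finset.univ.filter
        (fun a : F => a ≠ 0 ∧ Algebra.trace (ZMod 3) F a = 0),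
      kloos F (a ^ 2)
      = (1 / 3 : ℂ) * (-1 : ℂ) ^ r * (3 ^ r : ℂ) + 1 :=
  first_moment_trace_zero_square_args_general r F hF
end
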